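/- arXiv:2502.02906 — 6 statements merged into one kernel-verified Lean document; each statement's English description precedes it below -/
import Mathlib

section
/- Let X be a locally compact metric space, F a finite family of continuous self-maps of X, and V ⊆ X an open, relatively compact subset such that the closure of V is contained in the union over f ∈ F of f⁻¹(V). Then V satisfies the strong covering condition: there exists δ > 0 such that the δ-neighborhood of V is contained in the union over f ∈ F of the preimages f⁻¹(V_(δ)), where V_(δ) = {v ∈ V : B_δ(v) ⊆ V}. -/
/-!
The δ-interior of `V` is the complement of the δ-thickening of `Vᶜ`. For each point `x` of
the compact set `closure V` some `f i x` lies in the open set `V`, hence outside a closed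
thickening of `Vᶜ` of radius `1/(n+1)`; by continuity this persists on a neighbourhood of `x`.
These neighbourhoods form an increasing open cover of `closure V` indexed by `n`, so one of them
covers it, and then also a whole thickening of it.
-/

open Metric Set

theorem Metric.ball_subset_of_notMem_thickening_compl {Y : Type*} [PseudoMetricSpace Y]
    {δ : ℝ} {V : Set Y} {y : Y} (hy : y ∉ thickening δ Vᶜ) : ball y δ ⊆ V := by
  intro z hz
  by_contra hzV
  exact hy (mem_thickening_iff.2 ⟨z, hzV, by rwa [dist_comm, ← mem_ball]⟩)

theorem IsOpen.exists_notMem_cthickening_compl {Y : Type*} [PseudoMetricSpace Y] {V : Set Y}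
    (hV : IsOpen V) {y : Y} (hy : y ∈ V) : ∃ n : ℕ, y ∉ cthickening (1 / (n + 1)) Vᶜ := by
  have hy' : y ∉ closure Vᶜ := by rwa [hV.isClosed_compl.closure_eq, notMem_compl_iff]
  rw [closure_eq_iInter_cthickening] at hy'
  simp only [mem_iInter, not_forall] at hy'
  obtain ⟨ε, hε, hyε⟩ := hy'
  obtain ⟨n, hn⟩ := exists_nat_one_div_lt hε
  exact ⟨n, fun h => hyε (cthickening_mono hn.le _ h)⟩

theorem IsCompact.exists_pos_thickening_subset_iUnion_preimage
    {X Y ι : Type*} [PseudoMetricSpace X] [PseudoMetricSpace Y] {K : Set X} (hK : IsCompact K)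
    {g : ι → X → Y} (hg : ∀ i, Continuous (g i)) {V : Set Y} (hV : IsOpen V)
    (hKV : K ⊆ ⋃ i, g i ⁻¹' V) :
    ∃ δ > (0 : ℝ), thickening δ K ⊆ ⋃ i, g i ⁻¹' (thickening δ Vᶜ)ᶜ := by
  set U : ℕ → Set X := fun n => ⋃ i, g i ⁻¹' (cthickening (1 / (n + 1)) Vᶜ)ᶜ
  have hU_open : ∀ n, IsOpen (U n) := fun n =>
    isOpen_iUnion fun i => isClosed_cthickening.isOpen_compl.preimage (hg i)
  have hU_mono : Monotone U := fun n m hnm =>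
    iUnion_mono fun i => preimage_mono <|
      compl_subset_compl.2 (cthickening_mono (Nat.one_div_le_one_div hnm) _)
  have hKU : K ⊆ ⋃ n, U n := by
    intro x hx
    obtain ⟨i, hi⟩ := mem_iUnion.1 (hKV hx)
    obtain ⟨n, hn⟩ := hV.exists_notMem_cthickening_compl hi
    exact mem_iUnion.2 ⟨n, mem_iUnion.2 ⟨i, hn⟩⟩
  obtain ⟨n, hKn⟩ := hK.elim_directed_cover U hU_open hKU hU_mono.directed_le
  obtain ⟨δ, hδ, hδU⟩ := hK.exists_thickening_subset_open (hU_open n) hKn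
  refine ⟨min δ (1 / (n + 1)), by positivity, fun y hy => ?_⟩
  obtain ⟨i, hi⟩ := mem_iUnion.1 (hδU (thickening_mono (min_le_left _ _) _ hy))
  exact mem_iUnion.2
    ⟨i, fun h => hi (thickening_subset_cthickening_of_le (min_le_right _ _) _ h)⟩

theorem strong_covering_of_covering_general {X : Type*} [MetricSpace X]
    {ι : Type*} (f : ι → X → X) (hf : ∀ i, Continuous (f i))
    (V : Set X) (hVopen : IsOpen V) (hVcomp : IsCompact (closure V))
    (hcov : closure V ⊆ ⋃ i, (f i) ⁻¹' V) :
    ∃ δ > (0 : ℝ), (⋃ v ∈ V, ball v δ) ⊆ ⋃ i, (f i) ⁻¹' {v ∈ V | ball v δ ⊆ V} := by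
  obtain ⟨δ, hδ, hsub⟩ := hVcomp.exists_pos_thickening_subset_iUnion_preimage hf hVopen hcov
  refine ⟨δ, hδ, ?_⟩
  rw [← thickening_eq_biUnion_ball, ← thickening_closure]
  refine hsub.trans (iUnion_mono fun i => preimage_mono fun v hv => ?_)
  have hball := ball_subset_of_notMem_thickening_compl hv
  exact ⟨hball (mem_ball_self hδ), hball⟩

/-- **Strong covering from covering** (Lemma 3.2 / `lemma covering to strong`):
If `X` is a locally compact metric space, `F = {f i}` a finite family of continuous
self-maps of `X`, and `V ⊆ X` an open relatively compact set whose closure is covered by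
the preimages `f⁻¹(V)`, then `V` satisfies the strong covering condition: there is `δ > 0`
such that the `δ`-neighborhood of `V` is contained in the union of the preimages of the
`δ`-interior `V_(δ) = {v ∈ V | B_δ(v) ⊆ V}`. -/
theorem strong_covering_of_covering {X : Type*} [MetricSpace X] [LocallyCompactSpace X]
    {ι : Type*} [Fintype ι] (f : ι → X → X) (hf : ∀ i, Continuous (f i))
    (V : Set X) (hVopen : IsOpen V) (hVcomp : IsCompact (closure V))
    (hcov : closure V ⊆ ⋃ i, (f i) ⁻¹' V) :
    ∃ δ > (0 : ℝ), (⋃ v ∈ V, ball v δ) ⊆ ⋃ i, (f i) ⁻¹' {v ∈ V | ball v δ ⊆ V} :=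
  strong_covering_of_covering_general f hf V hVopen hVcomp hcov
end

section
/- Let X be a metric space, F = {f₁,…,f_k} a finite family of continuous self-maps of X, and V ⊆ X a subset satisfying the strong covering condition with respect to F with constant δ > 0. Then there exists ε > 0 such that for any family F̃ = {f̃₁,…,f̃_k} of continuous maps with sup_x d(f_i(x), f̃_i(x)) < ε for all i, the set V still satisfies the strong covering condition with respect to F̃. -/
open Metric Set

def StrongCovering {X ι : Type*} [PseudoMetricSpace X] (F : ι → X → X) (V : Set X) (δ : ℝ) :
    Prop :=
  (⋃ v ∈ V, ball v δ) ⊆ ⋃ i, F i ⁻¹' {v ∈ V | ball v δ ⊆ V}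

theorem StrongCovering.of_dist_lt {X ι : Type*} [PseudoMetricSpace X] {f g : ι → X → X}
    {V : Set X} {δ δ' ε : ℝ} (hcov : StrongCovering f V δ) (hδ' : 0 < δ') (hε : 0 ≤ ε)
    (hδ'ε : δ' + ε ≤ δ) (hclose : ∀ i x, dist (f i x) (g i x) < ε) :
    StrongCovering g V δ' := by
  intro x hx
  have hxδ : x ∈ ⋃ v ∈ V, ball v δ :=
    biUnion_mono subset_rfl (fun v _ => ball_subset_ball (by linarith)) hx
  obtain ⟨i, -, hball⟩ := mem_iUnion.mp (hcov hxδ)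
  have hsub : ball (g i x) δ' ⊆ V :=
    (ball_subset_ball' (by linarith [hclose i x, dist_comm (g i x) (f i x)])).trans hball
  exact mem_iUnion.mpr ⟨i, hsub (mem_ball_self hδ'), hsub⟩

theorem strong_covering_stable_general {X : Type*} [MetricSpace X] {k : ℕ}
    (f : Fin k → X → X)
    (V : Set X) (δ : ℝ) (hδ : 0 < δ)
    (hcov : (⋃ v ∈ V, ball v δ) ⊆ ⋃ i, (f i) ⁻¹' {v ∈ V | ball v δ ⊆ V}) :
    ∃ ε > (0 : ℝ), ∀ ft : Fin k → X → X, (∀ i, Continuous (ft i)) →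
      (∀ i x, dist (f i x) (ft i x) < ε) →
      ∃ δ' > (0 : ℝ),
        (⋃ v ∈ V, ball v δ') ⊆ ⋃ i, (ft i) ⁻¹' {v ∈ V | ball v δ' ⊆ V} :=
  ⟨δ / 2, half_pos hδ, fun _ _ hclose =>
    ⟨δ / 2, half_pos hδ,
      StrongCovering.of_dist_lt hcov (half_pos hδ) (half_pos hδ).le (by linarith) hclose⟩⟩

/-- **Stability of the strong covering condition** (Lemma 3.3):
If `V` satisfies the strong covering condition with constant `δ` with respect to the
finite family `f₁, …, f_k`, then there is `ε > 0` such that any family `f̃₁, …, f̃_k`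
of continuous maps that is `ε`-close to `f` in the `C⁰` (uniform) sense still makes `V`
satisfy the strong covering condition (for some constant `δ' > 0`). -/
theorem strong_covering_stable {X : Type*} [MetricSpace X] {k : ℕ}
    (f : Fin k → X → X) (hf : ∀ i, Continuous (f i))
    (V : Set X) (δ : ℝ) (hδ : 0 < δ)
    (hcov : (⋃ v ∈ V, ball v δ) ⊆ ⋃ i, (f i) ⁻¹' {v ∈ V | ball v δ ⊆ V}) :
    ∃ ε > (0 : ℝ), ∀ ft : Fin k → X → X, (∀ i, Continuous (ft i)) →
      (∀ i x, dist (f i x) (ft i x) < ε) →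
      ∃ δ' > (0 : ℝ),
        (⋃ v ∈ V, ball v δ') ⊆ ⋃ i, (ft i) ⁻¹' {v ∈ V | ball v δ' ⊆ V} :=
  strong_covering_stable_general f V δ hδ hcov
end

section
/- Let ρ, C > 0, μ′, μ, α ∈ (0,1), κ ≥ 1 with κ·μ^α < 1. Let {f_i} be a sequence of C^{1+α} diffeomorphisms from B_ρ(0) ⊂ ℝ^d onto their images, each fixing 0, with ‖f_i‖_{C^{1+α}} < C, with μ′ < ‖Df_i(y)‖_op < μ for all y ∈ B_ρ(0), and with ‖Df_i(0)‖_op·‖(Df_i(0))⁻¹‖_op ≤ κ for all i. Then the sequence F_n := (Df^n(0))⁻¹ ∘ f^n, where f^n := f_n ∘ ⋯ ∘ f_1, converges in the C^{1+α} topology on B_ρ(0), and there exists a constant C₈ (depending only on ρ, C, μ, μ′, α, κ, d) such that ‖F_{n} − F_{n-1}‖_{C^{1+α}} ≤ C₈·(κ·μ^α)^n for all n. -/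
/-!
Write `gₙ = fₙ ∘ ⋯ ∘ f₁` and `Lₙ = Aₙ ⋯ A₁`. Since `‖Dfᵢ‖ < μ`, `gₙ` shrinks the ball by `μⁿ`,
so along the orbit `Df_{n+1}` differs from `A_{n+1}` by at most `C (μⁿρ)^α`. The product of
the factors `1 + O(μ^{αi})` converges, hence `‖Dgₙ‖ ≤ K ‖A₁‖ ⋯ ‖Aₙ‖` with `K` independent of
`n`, and the same product controls the Hölder constant of `Dgₙ`.
The increment `F_{n+1} - Fₙ = L_{n+1}⁻¹ ∘ (f_{n+1} - A_{n+1}) ∘ gₙ` is therefore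
`C^{1+α}`-small of order `‖L_{n+1}⁻¹‖ ‖A₁‖ ⋯ ‖Aₙ‖ μ^{αn} ≤ κ^{n+1} μ^{αn} / μ'` by the bunching
bound `‖Aᵢ‖ ‖Aᵢ⁻¹‖ ≤ κ`. As `κ μ^α < 1` the increments are geometrically small, so `Fₙ`
converges in `C^{1+α}`, the derivatives converging uniformly.
-/

open Metric Set Filter Topology

noncomputable section

variable {d : ℕ}

/-- `comps f n = f n ∘ ⋯ ∘ f 1` (and `comps f 0 = id`). -/
def comps (f : ℕ → EuclideanSpace ℝ (Fin d) → EuclideanSpace ℝ (Fin d)) :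
    ℕ → EuclideanSpace ℝ (Fin d) → EuclideanSpace ℝ (Fin d)
  | 0 => id
  | n + 1 => f (n + 1) ∘ comps f n

/-- `Lcomp A n = A n ∘ ⋯ ∘ A 1` as continuous linear equivalences. -/
def Lcomp (A : ℕ → EuclideanSpace ℝ (Fin d) ≃L[ℝ] EuclideanSpace ℝ (Fin d)) :
    ℕ → EuclideanSpace ℝ (Fin d) ≃L[ℝ] EuclideanSpace ℝ (Fin d)
  | 0 => ContinuousLinearEquiv.refl ℝ (EuclideanSpace ℝ (Fin d))
  | n + 1 => (Lcomp A n).trans (A (n + 1))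

/-- The `C^{1+α}` distance of `F` and `G` on `s` is at most `c`: `C⁰` distance, `C¹`
distance and `α`-Hölder seminorm of the difference of the derivatives are all `≤ c`. -/
def C1aDistLE (α : ℝ) (s : Set (EuclideanSpace ℝ (Fin d)))
    (F G : EuclideanSpace ℝ (Fin d) → EuclideanSpace ℝ (Fin d)) (c : ℝ) : Prop :=
  (∀ x ∈ s, ‖F x - G x‖ ≤ c) ∧
  (∀ x ∈ s, ‖fderiv ℝ F x - fderiv ℝ G x‖ ≤ c) ∧
  (∀ x ∈ s, ∀ y ∈ s,
    ‖(fderiv ℝ F x - fderiv ℝ G x) - (fderiv ℝ F y - fderiv ℝ G y)‖ ≤ c * ‖x - y‖ ^ α)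

local notation "ℝᵈ" => EuclideanSpace ℝ (Fin d)

theorem ContinuousLinearMap.norm_comp_sub_comp_le {E F G : Type*} [SeminormedAddCommGroup E]
    [SeminormedAddCommGroup F] [SeminormedAddCommGroup G] [NormedSpace ℝ E] [NormedSpace ℝ F]
    [NormedSpace ℝ G] (B B' : F →L[ℝ] G) (D D' : E →L[ℝ] F) :
    ‖B.comp D - B'.comp D'‖ ≤ ‖B - B'‖ * ‖D‖ + ‖B'‖ * ‖D - D'‖ := by
  have hsplit : B.comp D - B'.comp D' = (B - B').comp D + B'.comp (D - D') := by
    rw [ContinuousLinearMap.sub_comp, ContinuousLinearMap.comp_sub]; abel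
  rw [hsplit]
  exact (norm_add_le _ _).trans (add_le_add (opNorm_comp_le _ _) (opNorm_comp_le _ _))

section Compositions

variable {f : ℕ → EuclideanSpace ℝ (Fin d) → EuclideanSpace ℝ (Fin d)}
  {s : Set (EuclideanSpace ℝ (Fin d))}

theorem comps_succ_apply (f : ℕ → ℝᵈ → ℝᵈ) (n : ℕ) (x : ℝᵈ) :
    comps f (n + 1) x = f (n + 1) (comps f n x) := rfl

theorem comps_apply_zero (hf : ∀ i, f (i + 1) 0 = 0) (n : ℕ) : comps f n 0 = 0 := by
  induction n with
  | zero => rfl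
  | succ n ih => rw [comps_succ_apply, ih, hf]

theorem mapsTo_comps (hf : ∀ i, MapsTo (f (i + 1)) s s) (n : ℕ) : MapsTo (comps f n) s s := by
  induction n with
  | zero => exact mapsTo_id s
  | succ n ih => exact (hf n).comp ih

theorem norm_comps_sub_le {μ : ℝ} (hμ : 0 ≤ μ) (hf : ∀ i, MapsTo (f (i + 1)) s s)
    (hlip : ∀ i, ∀ x ∈ s, ∀ y ∈ s, ‖f (i + 1) x - f (i + 1) y‖ ≤ μ * ‖x - y‖)
    (n : ℕ) {x y : ℝᵈ} (hx : x ∈ s) (hy : y ∈ s) :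
    ‖comps f n x - comps f n y‖ ≤ μ ^ n * ‖x - y‖ := by
  induction n with
  | zero => simp [comps]
  | succ n ih =>
    calc ‖comps f (n + 1) x - comps f (n + 1) y‖
        ≤ μ * ‖comps f n x - comps f n y‖ :=
          hlip n _ (mapsTo_comps hf n hx) _ (mapsTo_comps hf n hy)
      _ ≤ μ * (μ ^ n * ‖x - y‖) := by gcongr
      _ = μ ^ (n + 1) * ‖x - y‖ := by ring

theorem differentiableAt_comps (hf : ∀ i, MapsTo (f (i + 1)) s s)
    (hdiff : ∀ i, ∀ x ∈ s, DifferentiableAt ℝ (f (i + 1)) x) (n : ℕ) {x : ℝᵈ} (hx : x ∈ s) :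
    DifferentiableAt ℝ (comps f n) x := by
  induction n with
  | zero => exact differentiableAt_id
  | succ n ih => exact (hdiff n _ (mapsTo_comps hf n hx)).comp x ih

theorem fderiv_comps_succ (hf : ∀ i, MapsTo (f (i + 1)) s s)
    (hdiff : ∀ i, ∀ x ∈ s, DifferentiableAt ℝ (f (i + 1)) x) (n : ℕ) {x : ℝᵈ} (hx : x ∈ s) :
    fderiv ℝ (comps f (n + 1)) x =
      (fderiv ℝ (f (n + 1)) (comps f n x)).comp (fderiv ℝ (comps f n) x) :=
  fderiv_comp x (hdiff n _ (mapsTo_comps hf n hx)) (differentiableAt_comps hf hdiff n hx)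

theorem norm_fderiv_comps_le (hf : ∀ i, MapsTo (f (i + 1)) s s)
    (hdiff : ∀ i, ∀ x ∈ s, DifferentiableAt ℝ (f (i + 1)) x) {b : ℕ → ℝ}
    (hb : ∀ i, ∀ x ∈ s, ‖fderiv ℝ (f (i + 1)) (comps f i x)‖ ≤ b i) (n : ℕ) {x : ℝᵈ}
    (hx : x ∈ s) : ‖fderiv ℝ (comps f n) x‖ ≤ ∏ i ∈ Finset.range n, b i := by
  induction n with
  | zero => simpa [comps] using ContinuousLinearMap.norm_id_le
  | succ n ih =>
    rw [fderiv_comps_succ hf hdiff n hx, Finset.prod_range_succ, mul_comm]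
    exact (ContinuousLinearMap.opNorm_comp_le _ _).trans
      (mul_le_mul (hb n x hx) ih (norm_nonneg _) ((norm_nonneg _).trans (hb n x hx)))

theorem norm_fderiv_comps_sub_le (hf : ∀ i, MapsTo (f (i + 1)) s s)
    (hdiff : ∀ i, ∀ x ∈ s, DifferentiableAt ℝ (f (i + 1)) x) {α : ℝ} {b η : ℕ → ℝ}
    (hb : ∀ i, ∀ x ∈ s, ‖fderiv ℝ (f (i + 1)) (comps f i x)‖ ≤ b i)
    (hη : ∀ i, ∀ x ∈ s, ∀ y ∈ s, ‖fderiv ℝ (f (i + 1)) (comps f i x) -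
      fderiv ℝ (f (i + 1)) (comps f i y)‖ ≤ η i * b i * ‖x - y‖ ^ α)
    (n : ℕ) {x y : ℝᵈ} (hx : x ∈ s) (hy : y ∈ s) :
    ‖fderiv ℝ (comps f n) x - fderiv ℝ (comps f n) y‖ ≤
      (∑ i ∈ Finset.range n, η i) * (∏ i ∈ Finset.range n, b i) * ‖x - y‖ ^ α := by
  induction n with
  | zero => simp [comps]
  | succ n ih =>
    rw [fderiv_comps_succ hf hdiff n hx, fderiv_comps_succ hf hdiff n hy,
      Finset.sum_range_succ, Finset.prod_range_succ]
    have hDx := norm_fderiv_comps_le hf hdiff hb n hx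
    have hb0 : 0 ≤ b n := (norm_nonneg _).trans (hb n x hx)
    have ht : 0 ≤ ‖x - y‖ ^ α := Real.rpow_nonneg (norm_nonneg _) _
    calc _ ≤ ‖fderiv ℝ (f (n + 1)) (comps f n x) - fderiv ℝ (f (n + 1)) (comps f n y)‖ *
          ‖fderiv ℝ (comps f n) x‖ +
          ‖fderiv ℝ (f (n + 1)) (comps f n y)‖ *
            ‖fderiv ℝ (comps f n) x - fderiv ℝ (comps f n) y‖ :=
          ContinuousLinearMap.norm_comp_sub_comp_le _ _ _ _
      _ ≤ η n * b n * ‖x - y‖ ^ α * ∏ i ∈ Finset.range n, b i +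
          b n * ((∑ i ∈ Finset.range n, η i) * (∏ i ∈ Finset.range n, b i) * ‖x - y‖ ^ α) := by
          gcongr
          · exact (norm_nonneg _).trans (hη n x hx y hy)
          · exact hη n x hx y hy
          · exact hb n y hy
      _ = _ := by ring

end Compositions

section LinearParts

def prodOpNorm (A : ℕ → ℝᵈ ≃L[ℝ] ℝᵈ) (n : ℕ) : ℝ :=
  ∏ i ∈ Finset.range n, ‖(A (i + 1) : ℝᵈ →L[ℝ] ℝᵈ)‖

variable {A : ℕ → EuclideanSpace ℝ (Fin d) ≃L[ℝ] EuclideanSpace ℝ (Fin d)}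

theorem prodOpNorm_nonneg (n : ℕ) : 0 ≤ prodOpNorm A n := by
  unfold prodOpNorm; positivity

theorem prodOpNorm_succ (n : ℕ) :
    prodOpNorm A (n + 1) = prodOpNorm A n * ‖(A (n + 1) : ℝᵈ →L[ℝ] ℝᵈ)‖ :=
  Finset.prod_range_succ _ n

theorem Lcomp_symm_succ_apply (n : ℕ) (v : ℝᵈ) :
    (Lcomp A (n + 1)).symm v = (Lcomp A n).symm ((A (n + 1)).symm v) := rfl

theorem norm_Lcomp_symm_mul_prod_le {κ : ℝ}
    (hκ : ∀ i, ‖(A (i + 1) : ℝᵈ →L[ℝ] ℝᵈ)‖ * ‖((A (i + 1)).symm : ℝᵈ →L[ℝ] ℝᵈ)‖ ≤ κ) (n : ℕ) :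
    ‖((Lcomp A n).symm : ℝᵈ →L[ℝ] ℝᵈ)‖ * prodOpNorm A n ≤ κ ^ n := by
  induction n with
  | zero => simpa [Lcomp, prodOpNorm] using ContinuousLinearMap.norm_id_le
  | succ n ih =>
    have hcomp : ((Lcomp A (n + 1)).symm : ℝᵈ →L[ℝ] ℝᵈ) =
        ((Lcomp A n).symm : ℝᵈ →L[ℝ] ℝᵈ).comp ((A (n + 1)).symm : ℝᵈ →L[ℝ] ℝᵈ) := rfl
    have hP := prodOpNorm_nonneg (A := A) n
    rw [hcomp, prodOpNorm_succ, pow_succ]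
    calc _ ≤ ‖((Lcomp A n).symm : ℝᵈ →L[ℝ] ℝᵈ)‖ * ‖((A (n + 1)).symm : ℝᵈ →L[ℝ] ℝᵈ)‖ *
          (prodOpNorm A n * ‖(A (n + 1) : ℝᵈ →L[ℝ] ℝᵈ)‖) := by
          gcongr; exact ContinuousLinearMap.opNorm_comp_le _ _
      _ = (‖((Lcomp A n).symm : ℝᵈ →L[ℝ] ℝᵈ)‖ * prodOpNorm A n) *
          (‖(A (n + 1) : ℝᵈ →L[ℝ] ℝᵈ)‖ * ‖((A (n + 1)).symm : ℝᵈ →L[ℝ] ℝᵈ)‖) := by ring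
      _ ≤ κ ^ n * κ := mul_le_mul ih (hκ n) (by positivity) (ih.trans' (by positivity))

theorem Lcomp_symm_comps_succ_sub (f : ℕ → ℝᵈ → ℝᵈ) (n : ℕ) (x : ℝᵈ) :
    (Lcomp A (n + 1)).symm (comps f (n + 1) x) - (Lcomp A n).symm (comps f n x) =
      (Lcomp A (n + 1)).symm (f (n + 1) (comps f n x) - A (n + 1) (comps f n x)) := by
  rw [map_sub, Lcomp_symm_succ_apply n (A (n + 1) _), ContinuousLinearEquiv.symm_apply_apply]
  rfl

end LinearParts

section C1aDist

variable {α c : ℝ} {s : Set (EuclideanSpace ℝ (Fin d))}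
  {F G : EuclideanSpace ℝ (Fin d) → EuclideanSpace ℝ (Fin d)}

theorem C1aDistLE.mono {c' : ℝ} (h : C1aDistLE α s F G c) (hc : c ≤ c') :
    C1aDistLE α s F G c' :=
  ⟨fun x hx => (h.1 x hx).trans hc, fun x hx => (h.2.1 x hx).trans hc,
    fun x hx y hy => (h.2.2 x hx y hy).trans
      (mul_le_mul_of_nonneg_right hc (Real.rpow_nonneg (norm_nonneg _) _))⟩

theorem C1aDistLE.of_sub (hF : ∀ x ∈ s, DifferentiableAt ℝ F x)
    (hG : ∀ x ∈ s, DifferentiableAt ℝ G x) (h : C1aDistLE α s (F - G) 0 c) :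
    C1aDistLE α s F G c := by
  obtain ⟨h0, h1, h2⟩ := h
  refine ⟨fun x hx => by simpa using h0 x hx, fun x hx => ?_, fun x hx y hy => ?_⟩
  · simpa [fderiv_sub (hF x hx) (hG x hx)] using h1 x hx
  · simpa [fderiv_sub (hF x hx) (hG x hx), fderiv_sub (hF y hy) (hG y hy)] using h2 x hx y hy

theorem C1aDistLE.clm_comp (T : ℝᵈ →L[ℝ] ℝᵈ) (hF : ∀ x ∈ s, DifferentiableAt ℝ F x)
    (h : C1aDistLE α s F 0 c) : C1aDistLE α s (T ∘ F) 0 (‖T‖ * c) := by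
  obtain ⟨h0, h1, h2⟩ := h
  have hD : ∀ x ∈ s, fderiv ℝ (T ∘ F) x = T.comp (fderiv ℝ F x) := fun x hx =>
    (T.hasFDerivAt.comp x (hF x hx).hasFDerivAt).fderiv
  refine ⟨fun x hx => ?_, fun x hx => ?_, fun x hx y hy => ?_⟩
  · simpa using T.le_of_opNorm_le_of_le le_rfl (by simpa using h0 x hx)
  · simpa [hD x hx] using (T.opNorm_comp_le _).trans (by gcongr; simpa using h1 x hx)
  · have hsub : T.comp (fderiv ℝ F x) - T.comp (fderiv ℝ F y) =
        T.comp (fderiv ℝ F x - fderiv ℝ F y) := (T.comp_sub _ _).symm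
    have hxy := h2 x hx y hy
    simp only [fderiv_zero, Pi.zero_apply, sub_zero] at hxy ⊢
    rw [hD x hx, hD y hy, hsub, mul_assoc]
    exact (T.opNorm_comp_le _).trans (by gcongr)

end C1aDist

section Limit

theorem norm_sub_le_of_le_geometric_of_tendsto {X : Type*} [SeminormedAddCommGroup X]
    {u : ℕ → X} {a : X} {c r : ℝ} (hr : r < 1) (hu : ∀ n, ‖u (n + 1) - u n‖ ≤ c * r ^ n)
    (h : Tendsto u atTop (𝓝 a)) (n : ℕ) : ‖u n - a‖ ≤ c * r ^ n / (1 - r) := by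
  rw [← dist_eq_norm]
  exact dist_le_of_le_geometric_of_tendsto r c hr
    (fun n => by rw [dist_comm, dist_eq_norm]; exact hu n) h n

theorem tendsto_limUnder_of_le_geometric {X : Type*} [SeminormedAddCommGroup X] [CompleteSpace X]
    {u : ℕ → X} {c r : ℝ} (hr : r < 1) (hu : ∀ n, ‖u (n + 1) - u n‖ ≤ c * r ^ n) :
    Tendsto u atTop (𝓝 (limUnder atTop u)) :=
  (cauchySeq_of_le_geometric r c hr fun n => by
    rw [dist_comm, dist_eq_norm]; exact hu n).tendsto_limUnder

theorem fderiv_eq_of_norm_fderiv_sub_le {E F : Type*} [NormedAddCommGroup E] [NormedSpace ℝ E]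
    [NormedAddCommGroup F] [NormedSpace ℝ F] {s : Set E} {Φ : ℕ → E → F} {g : E → F}
    {G : E → E →L[ℝ] F} {e : ℕ → ℝ} (hs : IsOpen s)
    (hΦ : ∀ n, ∀ x ∈ s, DifferentiableAt ℝ (Φ n) x)
    (hg : ∀ x ∈ s, Tendsto (fun n => Φ n x) atTop (𝓝 (g x)))
    (hG : ∀ n, ∀ x ∈ s, ‖fderiv ℝ (Φ n) x - G x‖ ≤ e n) (he : Tendsto e atTop (𝓝 0))
    {x : E} (hx : x ∈ s) : fderiv ℝ g x = G x := by
  have hunif : TendstoUniformlyOn (fun n x => fderiv ℝ (Φ n) x) G atTop s := by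
    rw [Metric.tendstoUniformlyOn_iff]
    intro ε hε
    filter_upwards [he.eventually (gt_mem_nhds hε)] with n hn x hx
    rw [dist_comm, dist_eq_norm]
    exact (hG n x hx).trans_lt hn
  exact (hasFDerivAt_of_tendstoUniformlyOn hs hunif (fun n x hx => (hΦ n x hx).hasFDerivAt)
    hg hx).fderiv

variable {α c r : ℝ} {s : Set (EuclideanSpace ℝ (Fin d))}
  {Φ : ℕ → EuclideanSpace ℝ (Fin d) → EuclideanSpace ℝ (Fin d)}

theorem exists_C1aDistLE_limit_of_le_geometric (hs : IsOpen s) (hr0 : 0 ≤ r) (hr1 : r < 1)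
    (hΦ : ∀ n, ∀ x ∈ s, DifferentiableAt ℝ (Φ n) x)
    (hstep : ∀ n, C1aDistLE α s (Φ (n + 1)) (Φ n) (c * r ^ n)) :
    ∃ F : ℝᵈ → ℝᵈ, ∀ ε > 0, ∃ N, ∀ n ≥ N, C1aDistLE α s (Φ n) F ε := by
  set e : ℕ → ℝ := fun n => c * r ^ n / (1 - r)
  set F : ℝᵈ → ℝᵈ := fun x => limUnder atTop fun n => Φ n x
  set G : ℝᵈ → ℝᵈ →L[ℝ] ℝᵈ := fun x => limUnder atTop fun n => fderiv ℝ (Φ n) x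
  have hF : ∀ x ∈ s, Tendsto (fun n => Φ n x) atTop (𝓝 (F x)) := fun x hx =>
    tendsto_limUnder_of_le_geometric hr1 fun n => (hstep n).1 x hx
  have hG : ∀ x ∈ s, Tendsto (fun n => fderiv ℝ (Φ n) x) atTop (𝓝 (G x)) := fun x hx =>
    tendsto_limUnder_of_le_geometric hr1 fun n => (hstep n).2.1 x hx
  have hFe : ∀ n, ∀ x ∈ s, ‖Φ n x - F x‖ ≤ e n := fun n x hx =>
    norm_sub_le_of_le_geometric_of_tendsto hr1 (fun n => (hstep n).1 x hx) (hF x hx) n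
  have hGe : ∀ n, ∀ x ∈ s, ‖fderiv ℝ (Φ n) x - G x‖ ≤ e n := fun n x hx =>
    norm_sub_le_of_le_geometric_of_tendsto hr1 (fun n => (hstep n).2.1 x hx) (hG x hx) n
  have hGα : ∀ n, ∀ x ∈ s, ∀ y ∈ s,
      ‖(fderiv ℝ (Φ n) x - G x) - (fderiv ℝ (Φ n) y - G y)‖ ≤ e n * ‖x - y‖ ^ α := by
    intro n x hx y hy
    have hinc : ∀ m, ‖(fderiv ℝ (Φ (m + 1)) x - fderiv ℝ (Φ (m + 1)) y) -
        (fderiv ℝ (Φ m) x - fderiv ℝ (Φ m) y)‖ ≤ c * ‖x - y‖ ^ α * r ^ m := fun m => by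
      rw [sub_sub_sub_comm, mul_right_comm]; exact (hstep m).2.2 x hx y hy
    rw [sub_sub_sub_comm]
    calc _ ≤ c * ‖x - y‖ ^ α * r ^ n / (1 - r) :=
          norm_sub_le_of_le_geometric_of_tendsto hr1 hinc ((hG x hx).sub (hG y hy)) n
      _ = e n * ‖x - y‖ ^ α := by ring
  have he : Tendsto e atTop (𝓝 0) := by
    simpa using ((tendsto_pow_atTop_nhds_zero_of_lt_one hr0 hr1).const_mul c).div_const (1 - r)
  have hDF : ∀ x ∈ s, fderiv ℝ F x = G x := fun x hx =>
    fderiv_eq_of_norm_fderiv_sub_le hs hΦ hF hGe he hx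
  refine ⟨F, fun ε hε => ?_⟩
  obtain ⟨N, hN⟩ := eventually_atTop.1 (he.eventually (gt_mem_nhds hε))
  refine ⟨N, fun n hn => C1aDistLE.mono ⟨hFe n, fun x hx => ?_, fun x hx y hy => ?_⟩ (hN n hn).le⟩
  · rw [hDF x hx]; exact hGe n x hx
  · rw [hDF x hx, hDF y hy]; exact hGα n x hx y hy

end Limit

structure IsAdmissibleMap (ρ C μ' μ α : ℝ) (g : ℝᵈ → ℝᵈ) (A : ℝᵈ →L[ℝ] ℝᵈ) : Prop where
  map_zero : g 0 = 0
  differentiableAt : ∀ x ∈ ball (0 : ℝᵈ) ρ, DifferentiableAt ℝ g x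
  fderiv_zero : fderiv ℝ g 0 = A
  norm_fderiv_sub_le : ∀ x ∈ ball (0 : ℝᵈ) ρ, ∀ y ∈ ball (0 : ℝᵈ) ρ,
    ‖fderiv ℝ g x - fderiv ℝ g y‖ ≤ C * ‖x - y‖ ^ α
  norm_fderiv_lt : ∀ x ∈ ball (0 : ℝᵈ) ρ, ‖fderiv ℝ g x‖ < μ
  lt_norm : μ' < ‖A‖

namespace IsAdmissibleMap

variable {ρ C μ' μ α : ℝ} {g : EuclideanSpace ℝ (Fin d) → EuclideanSpace ℝ (Fin d)}
  {A : EuclideanSpace ℝ (Fin d) →L[ℝ] EuclideanSpace ℝ (Fin d)}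

theorem norm_sub_le (hg : IsAdmissibleMap ρ C μ' μ α g A) {x y : ℝᵈ} (hx : x ∈ ball 0 ρ)
    (hy : y ∈ ball 0 ρ) : ‖g x - g y‖ ≤ μ * ‖x - y‖ :=
  (convex_ball 0 ρ).norm_image_sub_le_of_norm_fderiv_le hg.differentiableAt
    (fun z hz => (hg.norm_fderiv_lt z hz).le) hy hx

theorem mapsTo_ball (hg : IsAdmissibleMap ρ C μ' μ α g A) (hμ : μ ≤ 1) :
    MapsTo g (ball 0 ρ) (ball 0 ρ) := fun x hx => by
  have h0 : (0 : ℝᵈ) ∈ ball 0 ρ := mem_ball_self (pos_of_mem_ball hx)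
  have hgx : ‖g x‖ ≤ μ * ‖x‖ := by simpa [hg.map_zero] using hg.norm_sub_le hx h0
  rw [mem_ball_zero_iff] at hx ⊢
  exact hgx.trans_lt ((mul_le_of_le_one_left (norm_nonneg x) hμ).trans_lt hx)

theorem norm_fderiv_sub_le_rpow (hg : IsAdmissibleMap ρ C μ' μ α g A) {y : ℝᵈ}
    (hy : y ∈ ball 0 ρ) : ‖fderiv ℝ g y - A‖ ≤ C * ‖y‖ ^ α := by
  simpa [hg.fderiv_zero] using hg.norm_fderiv_sub_le y hy 0 (mem_ball_self (pos_of_mem_ball hy))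

theorem norm_sub_apply_le (hg : IsAdmissibleMap ρ C μ' μ α g A) (hC : 0 ≤ C) (hα : 0 ≤ α)
    {y : ℝᵈ} (hy : y ∈ ball 0 ρ) : ‖g y - A y‖ ≤ C * ‖y‖ ^ α * ‖y‖ := by
  have hsub : closedBall (0 : ℝᵈ) ‖y‖ ⊆ ball 0 ρ := closedBall_subset_ball (mem_ball_zero_iff.1 hy)
  have hD : ∀ z ∈ closedBall (0 : ℝᵈ) ‖y‖, ‖fderiv ℝ g z - A‖ ≤ C * ‖y‖ ^ α := fun z hz =>
    (hg.norm_fderiv_sub_le_rpow (hsub hz)).trans <| by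
      gcongr; exact mem_closedBall_zero_iff.1 hz
  simpa [hg.map_zero] using (convex_closedBall 0 ‖y‖).norm_image_sub_le_of_norm_fderiv_le'
    (fun z hz => hg.differentiableAt z (hsub hz)) hD (mem_closedBall_self (norm_nonneg y))
    (mem_closedBall_zero_iff.2 le_rfl)

end IsAdmissibleMap

theorem geom_sum_range_le_inv_one_sub {q : ℝ} (hq0 : 0 ≤ q) (hq1 : q < 1) (n : ℕ) :
    ∑ i ∈ Finset.range n, q ^ i ≤ (1 - q)⁻¹ := by
  have h := geom_sum_Ico_le_of_lt_one (m := 0) (n := n) hq0 hq1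
  rwa [← Finset.range_eq_Ico, pow_zero, one_div] at h

theorem prod_mul_exp_le {a : ℕ → ℝ} {c q : ℝ} (ha : ∀ i, 0 ≤ a i) (hc : 0 ≤ c) (hq0 : 0 ≤ q)
    (hq1 : q < 1) (n : ℕ) :
    ∏ i ∈ Finset.range n, (a i * Real.exp (c * q ^ i)) ≤
      (∏ i ∈ Finset.range n, a i) * Real.exp (c * (1 - q)⁻¹) := by
  rw [Finset.prod_mul_distrib, ← Real.exp_sum, ← Finset.mul_sum]
  gcongr
  · exact Finset.prod_nonneg fun i _ => ha i
  · exact geom_sum_range_le_inv_one_sub hq0 hq1 n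

/-- `exp (C ρ^α / μ' · ∑ᵢ μ^{αi})`, which bounds `‖D(f n ∘ ⋯ ∘ f 1)‖ / (‖A 1‖ ⋯ ‖A n‖)`
uniformly in `n`. -/
def distortionBound (ρ C μ' μ α : ℝ) : ℝ := Real.exp (C * ρ ^ α / μ' * (1 - μ ^ α)⁻¹)

section AdmissibleSequence

variable {ρ C μ' μ α : ℝ} {f : ℕ → EuclideanSpace ℝ (Fin d) → EuclideanSpace ℝ (Fin d)}
  {A : ℕ → EuclideanSpace ℝ (Fin d) ≃L[ℝ] EuclideanSpace ℝ (Fin d)}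

theorem norm_comps_sub_le_of_admissible
    (hf : ∀ i, IsAdmissibleMap ρ C μ' μ α (f (i + 1)) (A (i + 1))) (hμ0 : 0 ≤ μ) (hμ1 : μ ≤ 1)
    (n : ℕ) {x y : ℝᵈ} (hx : x ∈ ball 0 ρ) (hy : y ∈ ball 0 ρ) :
    ‖comps f n x - comps f n y‖ ≤ μ ^ n * ‖x - y‖ :=
  norm_comps_sub_le hμ0 (fun i => (hf i).mapsTo_ball hμ1)
    (fun i _ hx _ hy => (hf i).norm_sub_le hx hy) n hx hy

theorem rpow_norm_comps_le (hf : ∀ i, IsAdmissibleMap ρ C μ' μ α (f (i + 1)) (A (i + 1)))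
    (hμ0 : 0 ≤ μ) (hμ1 : μ ≤ 1) (hα : 0 ≤ α) (n : ℕ) {x : ℝᵈ} (hx : x ∈ ball 0 ρ) :
    ‖comps f n x‖ ^ α ≤ ρ ^ α * (μ ^ α) ^ n := by
  have hρ : 0 < ρ := pos_of_mem_ball hx
  have hgx : ‖comps f n x‖ ≤ μ ^ n * ρ := by
    have h := norm_comps_sub_le_of_admissible hf hμ0 hμ1 n hx (mem_ball_self hρ)
    rw [comps_apply_zero fun i => (hf i).map_zero, sub_zero, sub_zero] at h
    exact h.trans (by gcongr; exact (mem_ball_zero_iff.1 hx).le)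
  calc ‖comps f n x‖ ^ α ≤ (μ ^ n * ρ) ^ α := by gcongr
    _ = ρ ^ α * (μ ^ α) ^ n := by
      rw [Real.mul_rpow (by positivity) hρ.le, ← Real.rpow_pow_comm hμ0, mul_comm]

theorem norm_fderiv_succ_comps_le (hf : ∀ i, IsAdmissibleMap ρ C μ' μ α (f (i + 1)) (A (i + 1)))
    (hμ0 : 0 ≤ μ) (hμ1 : μ ≤ 1) (hC : 0 ≤ C) (hα : 0 ≤ α) (hμ' : 0 < μ') (n : ℕ) {x : ℝᵈ}
    (hx : x ∈ ball 0 ρ) :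
    ‖fderiv ℝ (f (n + 1)) (comps f n x)‖ ≤
      ‖(A (n + 1) : ℝᵈ →L[ℝ] ℝᵈ)‖ * Real.exp (C * ρ ^ α / μ' * (μ ^ α) ^ n) := by
  set a := ‖(A (n + 1) : ℝᵈ →L[ℝ] ℝᵈ)‖
  set t := C * ρ ^ α / μ' * (μ ^ α) ^ n
  have hy : comps f n x ∈ ball 0 ρ := mapsTo_comps (fun i => (hf i).mapsTo_ball hμ1) n hx
  have ht : 0 ≤ t := mul_nonneg
    (div_nonneg (mul_nonneg hC (Real.rpow_nonneg (pos_of_mem_ball hx).le α)) hμ'.le)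
    (pow_nonneg (Real.rpow_nonneg hμ0 α) n)
  calc ‖fderiv ℝ (f (n + 1)) (comps f n x)‖
      ≤ a + ‖fderiv ℝ (f (n + 1)) (comps f n x) - (A (n + 1) : ℝᵈ →L[ℝ] ℝᵈ)‖ :=
        norm_le_norm_add_norm_sub' _ _
    _ ≤ a + a * t := by
      gcongr
      calc _ ≤ C * ‖comps f n x‖ ^ α := (hf n).norm_fderiv_sub_le_rpow hy
        _ ≤ C * (ρ ^ α * (μ ^ α) ^ n) := by gcongr; exact rpow_norm_comps_le hf hμ0 hμ1 hα n hx
        _ = μ' * t := by simp only [t]; field_simp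
        _ ≤ a * t := by gcongr; exact (hf n).lt_norm.le
    _ = a * (t + 1) := by ring
    _ ≤ a * Real.exp t := by gcongr; exact Real.add_one_le_exp t

theorem norm_fderiv_succ_comps_sub_le
    (hf : ∀ i, IsAdmissibleMap ρ C μ' μ α (f (i + 1)) (A (i + 1))) (hμ0 : 0 ≤ μ) (hμ1 : μ ≤ 1)
    (hC : 0 ≤ C) (hα : 0 ≤ α) (n : ℕ) {x y : ℝᵈ} (hx : x ∈ ball 0 ρ) (hy : y ∈ ball 0 ρ) :
    ‖fderiv ℝ (f (n + 1)) (comps f n x) - fderiv ℝ (f (n + 1)) (comps f n y)‖ ≤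
      C * (μ ^ α) ^ n * ‖x - y‖ ^ α := by
  have hmaps := mapsTo_comps (fun i => (hf i).mapsTo_ball hμ1) n
  calc _ ≤ C * ‖comps f n x - comps f n y‖ ^ α :=
        (hf n).norm_fderiv_sub_le _ (hmaps hx) _ (hmaps hy)
    _ ≤ C * (μ ^ n * ‖x - y‖) ^ α := by
        gcongr; exact norm_comps_sub_le_of_admissible hf hμ0 hμ1 n hx hy
    _ = C * (μ ^ α) ^ n * ‖x - y‖ ^ α := by
        rw [Real.mul_rpow (pow_nonneg hμ0 n) (norm_nonneg _), ← Real.rpow_pow_comm hμ0, mul_assoc]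

theorem norm_fderiv_comps_le_prodOpNorm
    (hf : ∀ i, IsAdmissibleMap ρ C μ' μ α (f (i + 1)) (A (i + 1))) (hμ0 : 0 ≤ μ) (hμ1 : μ ≤ 1)
    (hC : 0 ≤ C) (hα : 0 ≤ α) (hμ' : 0 < μ') (hq : μ ^ α < 1) (n : ℕ) {x : ℝᵈ}
    (hx : x ∈ ball 0 ρ) :
    ‖fderiv ℝ (comps f n) x‖ ≤ prodOpNorm A n * distortionBound ρ C μ' μ α :=
  (norm_fderiv_comps_le (fun i => (hf i).mapsTo_ball hμ1) (fun i => (hf i).differentiableAt)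
    (fun i _ hx => norm_fderiv_succ_comps_le hf hμ0 hμ1 hC hα hμ' i hx) n hx).trans
    (prod_mul_exp_le (fun _ => norm_nonneg _)
      (div_nonneg (mul_nonneg hC (Real.rpow_nonneg (pos_of_mem_ball hx).le α)) hμ'.le)
      (Real.rpow_nonneg hμ0 α) hq n)

theorem norm_fderiv_comps_sub_le_prodOpNorm
    (hf : ∀ i, IsAdmissibleMap ρ C μ' μ α (f (i + 1)) (A (i + 1))) (hμ0 : 0 ≤ μ) (hμ1 : μ ≤ 1)
    (hC : 0 ≤ C) (hα : 0 ≤ α) (hμ' : 0 < μ') (hq : μ ^ α < 1) (n : ℕ) {x y : ℝᵈ}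
    (hx : x ∈ ball 0 ρ) (hy : y ∈ ball 0 ρ) :
    ‖fderiv ℝ (comps f n) x - fderiv ℝ (comps f n) y‖ ≤
      C / μ' * (1 - μ ^ α)⁻¹ * (prodOpNorm A n * distortionBound ρ C μ' μ α) *
        ‖x - y‖ ^ α := by
  have hq0 : 0 ≤ μ ^ α := Real.rpow_nonneg hμ0 α
  have hc : 0 ≤ C * ρ ^ α / μ' :=
    div_nonneg (mul_nonneg hC (Real.rpow_nonneg (pos_of_mem_ball hx).le α)) hμ'.le
  have hη : ∀ i, ∀ x ∈ ball (0 : ℝᵈ) ρ, ∀ y ∈ ball (0 : ℝᵈ) ρ,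
      ‖fderiv ℝ (f (i + 1)) (comps f i x) - fderiv ℝ (f (i + 1)) (comps f i y)‖ ≤
        C / μ' * (μ ^ α) ^ i * (‖(A (i + 1) : ℝᵈ →L[ℝ] ℝᵈ)‖ *
          Real.exp (C * ρ ^ α / μ' * (μ ^ α) ^ i)) * ‖x - y‖ ^ α := by
    intro i x hx y hy
    have hb : μ' ≤ ‖(A (i + 1) : ℝᵈ →L[ℝ] ℝᵈ)‖ * Real.exp (C * ρ ^ α / μ' * (μ ^ α) ^ i) :=
      (hf i).lt_norm.le.trans (le_mul_of_one_le_right (norm_nonneg _)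
        (Real.one_le_exp (mul_nonneg hc (pow_nonneg hq0 i))))
    calc _ ≤ C * (μ ^ α) ^ i * ‖x - y‖ ^ α := norm_fderiv_succ_comps_sub_le hf hμ0 hμ1 hC hα i hx hy
      _ = C / μ' * (μ ^ α) ^ i * μ' * ‖x - y‖ ^ α := by field_simp
      _ ≤ _ := by gcongr
  calc _ ≤ (∑ i ∈ Finset.range n, C / μ' * (μ ^ α) ^ i) *
        (∏ i ∈ Finset.range n, ‖(A (i + 1) : ℝᵈ →L[ℝ] ℝᵈ)‖ *
          Real.exp (C * ρ ^ α / μ' * (μ ^ α) ^ i)) * ‖x - y‖ ^ α :=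
        norm_fderiv_comps_sub_le (fun i => (hf i).mapsTo_ball hμ1)
          (fun i => (hf i).differentiableAt)
          (fun i _ hx => norm_fderiv_succ_comps_le hf hμ0 hμ1 hC hα hμ' i hx) hη n hx hy
    _ ≤ _ := by
        rw [← Finset.mul_sum]
        gcongr
        · exact geom_sum_range_le_inv_one_sub hq0 hq n
        · exact prod_mul_exp_le (fun _ => norm_nonneg _) hc hq0 hq n

theorem norm_comps_le_prodOpNorm
    (hf : ∀ i, IsAdmissibleMap ρ C μ' μ α (f (i + 1)) (A (i + 1))) (hμ0 : 0 ≤ μ) (hμ1 : μ ≤ 1)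
    (hC : 0 ≤ C) (hα : 0 ≤ α) (hμ' : 0 < μ') (hq : μ ^ α < 1) (n : ℕ) {x : ℝᵈ}
    (hx : x ∈ ball 0 ρ) :
    ‖comps f n x‖ ≤ prodOpNorm A n * distortionBound ρ C μ' μ α * ‖x‖ := by
  have h := (convex_ball (0 : ℝᵈ) ρ).norm_image_sub_le_of_norm_fderiv_le
    (fun z hz => differentiableAt_comps (fun i => (hf i).mapsTo_ball hμ1)
      (fun i => (hf i).differentiableAt) n hz)
    (fun z hz => norm_fderiv_comps_le_prodOpNorm hf hμ0 hμ1 hC hα hμ' hq n hz)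
    (mem_ball_self (pos_of_mem_ball hx)) hx
  simpa [comps_apply_zero fun i => (hf i).map_zero] using h

theorem hasFDerivAt_remainder_comps
    (hf : ∀ i, IsAdmissibleMap ρ C μ' μ α (f (i + 1)) (A (i + 1))) (hμ1 : μ ≤ 1) (m : ℕ)
    {x : ℝᵈ} (hx : x ∈ ball 0 ρ) :
    HasFDerivAt (fun x => f (m + 1) (comps f m x) - A (m + 1) (comps f m x))
      ((fderiv ℝ (f (m + 1)) (comps f m x) - (A (m + 1) : ℝᵈ →L[ℝ] ℝᵈ)).comp
        (fderiv ℝ (comps f m) x)) x := by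
  have hmaps := fun i => (hf i).mapsTo_ball hμ1
  have hg := (differentiableAt_comps hmaps (fun i => (hf i).differentiableAt) m hx).hasFDerivAt
  rw [ContinuousLinearMap.sub_comp]
  exact (((hf m).differentiableAt _ (mapsTo_comps hmaps m hx)).hasFDerivAt.comp x hg).sub
    ((A (m + 1) : ℝᵈ →L[ℝ] ℝᵈ).hasFDerivAt.comp x hg)

theorem norm_remainder_comps_le
    (hf : ∀ i, IsAdmissibleMap ρ C μ' μ α (f (i + 1)) (A (i + 1))) (hμ0 : 0 ≤ μ) (hμ1 : μ ≤ 1)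
    (hC : 0 ≤ C) (hα : 0 ≤ α) (hμ' : 0 < μ') (hq : μ ^ α < 1) (m : ℕ) {x : ℝᵈ}
    (hx : x ∈ ball 0 ρ) :
    ‖f (m + 1) (comps f m x) - A (m + 1) (comps f m x)‖ ≤
      C * ρ ^ α * ρ * distortionBound ρ C μ' μ α * ((μ ^ α) ^ m * prodOpNorm A m) := by
  have hρ : 0 < ρ := pos_of_mem_ball hx
  have hy := mapsTo_comps (fun i => (hf i).mapsTo_ball hμ1) m hx
  have hyα := rpow_norm_comps_le hf hμ0 hμ1 hα m hx
  have hgx : ‖comps f m x‖ ≤ prodOpNorm A m * distortionBound ρ C μ' μ α * ρ :=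
    (norm_comps_le_prodOpNorm hf hμ0 hμ1 hC hα hμ' hq m hx).trans <|
      mul_le_mul_of_nonneg_left (mem_ball_zero_iff.1 hx).le
        (mul_nonneg (prodOpNorm_nonneg m) (Real.exp_pos _).le)
  calc _ ≤ C * ‖comps f m x‖ ^ α * ‖comps f m x‖ := (hf m).norm_sub_apply_le hC hα hy
    _ ≤ C * (ρ ^ α * (μ ^ α) ^ m) * (prodOpNorm A m * distortionBound ρ C μ' μ α * ρ) := by
        gcongr
    _ = _ := by ring

theorem norm_fderiv_remainder_comps_le
    (hf : ∀ i, IsAdmissibleMap ρ C μ' μ α (f (i + 1)) (A (i + 1))) (hμ0 : 0 ≤ μ) (hμ1 : μ ≤ 1)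
    (hC : 0 ≤ C) (hα : 0 ≤ α) (hμ' : 0 < μ') (hq : μ ^ α < 1) (m : ℕ) {x : ℝᵈ}
    (hx : x ∈ ball 0 ρ) :
    ‖(fderiv ℝ (f (m + 1)) (comps f m x) - (A (m + 1) : ℝᵈ →L[ℝ] ℝᵈ)).comp
        (fderiv ℝ (comps f m) x)‖ ≤
      C * ρ ^ α * distortionBound ρ C μ' μ α * ((μ ^ α) ^ m * prodOpNorm A m) := by
  have hρ : 0 < ρ := pos_of_mem_ball hx
  have hy := mapsTo_comps (fun i => (hf i).mapsTo_ball hμ1) m hx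
  have hyα := rpow_norm_comps_le hf hμ0 hμ1 hα m hx
  have hB : ‖fderiv ℝ (f (m + 1)) (comps f m x) - (A (m + 1) : ℝᵈ →L[ℝ] ℝᵈ)‖ ≤
      C * (ρ ^ α * (μ ^ α) ^ m) :=
    ((hf m).norm_fderiv_sub_le_rpow hy).trans (by gcongr)
  calc _ ≤ ‖fderiv ℝ (f (m + 1)) (comps f m x) - (A (m + 1) : ℝᵈ →L[ℝ] ℝᵈ)‖ *
        ‖fderiv ℝ (comps f m) x‖ := ContinuousLinearMap.opNorm_comp_le _ _
    _ ≤ C * (ρ ^ α * (μ ^ α) ^ m) * (prodOpNorm A m * distortionBound ρ C μ' μ α) :=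
        mul_le_mul hB (norm_fderiv_comps_le_prodOpNorm hf hμ0 hμ1 hC hα hμ' hq m hx)
          (norm_nonneg _) ((norm_nonneg _).trans hB)
    _ = _ := by ring

theorem norm_fderiv_remainder_comps_sub_le
    (hf : ∀ i, IsAdmissibleMap ρ C μ' μ α (f (i + 1)) (A (i + 1))) (hμ0 : 0 ≤ μ) (hμ1 : μ ≤ 1)
    (hC : 0 ≤ C) (hα : 0 ≤ α) (hμ' : 0 < μ') (hq : μ ^ α < 1) (m : ℕ) {x y : ℝᵈ}
    (hx : x ∈ ball 0 ρ) (hy : y ∈ ball 0 ρ) :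
    ‖(fderiv ℝ (f (m + 1)) (comps f m x) - (A (m + 1) : ℝᵈ →L[ℝ] ℝᵈ)).comp
        (fderiv ℝ (comps f m) x) -
      (fderiv ℝ (f (m + 1)) (comps f m y) - (A (m + 1) : ℝᵈ →L[ℝ] ℝᵈ)).comp
        (fderiv ℝ (comps f m) y)‖ ≤
      C * (1 + ρ ^ α * (C / μ' * (1 - μ ^ α)⁻¹)) * distortionBound ρ C μ' μ α *
        ((μ ^ α) ^ m * prodOpNorm A m) * ‖x - y‖ ^ α := by
  set Bx := fderiv ℝ (f (m + 1)) (comps f m x)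
  set By := fderiv ℝ (f (m + 1)) (comps f m y)
  set Dx := fderiv ℝ (comps f m) x
  set Dy := fderiv ℝ (comps f m) y
  set L := (A (m + 1) : ℝᵈ →L[ℝ] ℝᵈ)
  have hρ : 0 < ρ := pos_of_mem_ball hx
  have hy' := mapsTo_comps (fun i => (hf i).mapsTo_ball hμ1) m hy
  have hyα := rpow_norm_comps_le hf hμ0 hμ1 hα m hy
  have hBB : ‖Bx - By‖ ≤ C * (μ ^ α) ^ m * ‖x - y‖ ^ α :=
    norm_fderiv_succ_comps_sub_le hf hμ0 hμ1 hC hα m hx hy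
  have hDx : ‖Dx‖ ≤ prodOpNorm A m * distortionBound ρ C μ' μ α :=
    norm_fderiv_comps_le_prodOpNorm hf hμ0 hμ1 hC hα hμ' hq m hx
  have hBL : ‖By - L‖ ≤ C * (ρ ^ α * (μ ^ α) ^ m) :=
    ((hf m).norm_fderiv_sub_le_rpow hy').trans (by gcongr)
  have hDD : ‖Dx - Dy‖ ≤
      C / μ' * (1 - μ ^ α)⁻¹ * (prodOpNorm A m * distortionBound ρ C μ' μ α) * ‖x - y‖ ^ α :=
    norm_fderiv_comps_sub_le_prodOpNorm hf hμ0 hμ1 hC hα hμ' hq m hx hy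
  calc _ ≤ ‖Bx - By‖ * ‖Dx‖ + ‖By - L‖ * ‖Dx - Dy‖ := by
        simpa using ContinuousLinearMap.norm_comp_sub_comp_le (Bx - L) (By - L) Dx Dy
    _ ≤ C * (μ ^ α) ^ m * ‖x - y‖ ^ α * (prodOpNorm A m * distortionBound ρ C μ' μ α) +
        C * (ρ ^ α * (μ ^ α) ^ m) * (C / μ' * (1 - μ ^ α)⁻¹ *
          (prodOpNorm A m * distortionBound ρ C μ' μ α) * ‖x - y‖ ^ α) :=
        add_le_add (mul_le_mul hBB hDx (norm_nonneg _) ((norm_nonneg _).trans hBB))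
          (mul_le_mul hBL hDD (norm_nonneg _) ((norm_nonneg _).trans hBL))
    _ = _ := by ring

theorem exists_C1aDistLE_remainder_comps
    (hf : ∀ i, IsAdmissibleMap ρ C μ' μ α (f (i + 1)) (A (i + 1))) (hμ0 : 0 ≤ μ) (hμ1 : μ ≤ 1)
    (hC : 0 < C) (hα : 0 ≤ α) (hμ' : 0 < μ') (hq : μ ^ α < 1) (hρ : 0 < ρ) :
    ∃ c₀ > 0, ∀ m, C1aDistLE α (ball 0 ρ)
      (fun x => f (m + 1) (comps f m x) - A (m + 1) (comps f m x)) 0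
      (c₀ * ((μ ^ α) ^ m * prodOpNorm A m)) := by
  set K := distortionBound ρ C μ' μ α
  have hK : 0 < K := Real.exp_pos _
  have hM : 0 ≤ C / μ' * (1 - μ ^ α)⁻¹ := by have := sub_pos.2 hq; positivity
  have h₀ : 0 ≤ C * ρ ^ α * ρ * K := by positivity
  have h₁ : 0 ≤ C * ρ ^ α * K := by positivity
  have h₂ : 0 < C * (1 + ρ ^ α * (C / μ' * (1 - μ ^ α)⁻¹)) * K := by positivity
  refine ⟨C * ρ ^ α * ρ * K + C * ρ ^ α * K + C * (1 + ρ ^ α * (C / μ' * (1 - μ ^ α)⁻¹)) * K,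
    by positivity, fun m => ?_⟩
  have hw : 0 ≤ (μ ^ α) ^ m * prodOpNorm A m :=
    mul_nonneg (pow_nonneg (Real.rpow_nonneg hμ0 α) m) (prodOpNorm_nonneg m)
  have hD := fun x (hx : x ∈ ball (0 : ℝᵈ) ρ) => (hasFDerivAt_remainder_comps hf hμ1 m hx).fderiv
  refine ⟨fun x hx => ?_, fun x hx => ?_, fun x hx y hy => ?_⟩
  · simpa using (norm_remainder_comps_le hf hμ0 hμ1 hC.le hα hμ' hq m hx).trans
      (by gcongr; linarith)
  · simpa [hD x hx] using (norm_fderiv_remainder_comps_le hf hμ0 hμ1 hC.le hα hμ' hq m hx).trans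
      (by gcongr; linarith)
  · simpa [hD x hx, hD y hy] using
      (norm_fderiv_remainder_comps_sub_le hf hμ0 hμ1 hC.le hα hμ' hq m hx hy).trans
        (by gcongr; linarith)

theorem differentiableAt_Lcomp_symm_comps
    (hf : ∀ i, IsAdmissibleMap ρ C μ' μ α (f (i + 1)) (A (i + 1))) (hμ1 : μ ≤ 1) (n : ℕ)
    {x : ℝᵈ} (hx : x ∈ ball 0 ρ) :
    DifferentiableAt ℝ (fun x => (Lcomp A n).symm (comps f n x)) x :=
  (Lcomp A n).symm.differentiableAt.comp x
    (differentiableAt_comps (fun i => (hf i).mapsTo_ball hμ1)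
      (fun i => (hf i).differentiableAt) n hx)

theorem exists_C1aDistLE_Lcomp_symm_comps_succ
    (hf : ∀ i, IsAdmissibleMap ρ C μ' μ α (f (i + 1)) (A (i + 1))) (hμ0 : 0 < μ) (hμ1 : μ ≤ 1)
    (hC : 0 < C) (hα : 0 ≤ α) (hμ' : 0 < μ') (hq : μ ^ α < 1) (hρ : 0 < ρ) {κ : ℝ}
    (hκ : ∀ i, ‖(A (i + 1) : ℝᵈ →L[ℝ] ℝᵈ)‖ * ‖((A (i + 1)).symm : ℝᵈ →L[ℝ] ℝᵈ)‖ ≤ κ) :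
    ∃ C₈ > 0, ∀ m, C1aDistLE α (ball 0 ρ)
      (fun x => (Lcomp A (m + 1)).symm (comps f (m + 1) x))
      (fun x => (Lcomp A m).symm (comps f m x)) (C₈ * (κ * μ ^ α) ^ (m + 1)) := by
  obtain ⟨c₀, hc₀, hrem⟩ := exists_C1aDistLE_remainder_comps hf hμ0.le hμ1 hC hα hμ' hq hρ
  have hq0 : 0 < μ ^ α := Real.rpow_pos_of_pos hμ0 α
  refine ⟨c₀ / (μ' * μ ^ α), by positivity, fun m => ?_⟩
  refine C1aDistLE.of_sub (fun x hx => differentiableAt_Lcomp_symm_comps hf hμ1 (m + 1) hx)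
    (fun x hx => differentiableAt_Lcomp_symm_comps hf hμ1 m hx) ?_
  rw [show ((fun x => (Lcomp A (m + 1)).symm (comps f (m + 1) x)) -
      fun x => (Lcomp A m).symm (comps f m x)) =
      ((Lcomp A (m + 1)).symm : ℝᵈ →L[ℝ] ℝᵈ) ∘
        (fun x => f (m + 1) (comps f m x) - A (m + 1) (comps f m x)) from
    funext (Lcomp_symm_comps_succ_sub f m)]
  refine ((hrem m).clm_comp _
    (fun x hx => (hasFDerivAt_remainder_comps hf hμ1 m hx).differentiableAt)).mono ?_
  set L := ‖((Lcomp A (m + 1)).symm : ℝᵈ →L[ℝ] ℝᵈ)‖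
  have hL : L * prodOpNorm A m * μ' ≤ κ ^ (m + 1) := by
    have h := norm_Lcomp_symm_mul_prod_le hκ (m + 1)
    rw [prodOpNorm_succ, ← mul_assoc] at h
    exact (mul_le_mul_of_nonneg_left (hf m).lt_norm.le
      (mul_nonneg (norm_nonneg _) (prodOpNorm_nonneg m))).trans h
  calc L * (c₀ * ((μ ^ α) ^ m * prodOpNorm A m))
      = c₀ * (μ ^ α) ^ m / μ' * (L * prodOpNorm A m * μ') := by field_simp
    _ ≤ c₀ * (μ ^ α) ^ m / μ' * κ ^ (m + 1) := by gcongr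
    _ = c₀ / (μ' * μ ^ α) * (κ * μ ^ α) ^ (m + 1) := by field_simp; ring

end AdmissibleSequence

theorem convergence_of_geometries_general
    (ρ C μ' μ α κ : ℝ) (hρ : 0 < ρ) (hC : 0 < C)
    (hμ'0 : 0 < μ') (hμ'μ : μ' < μ) (hμ1 : μ < 1)
    (hα0 : 0 < α) (hκ1 : 1 ≤ κ) (hbunch : κ * μ ^ α < 1)
    (f : ℕ → EuclideanSpace ℝ (Fin d) → EuclideanSpace ℝ (Fin d))
    (A : ℕ → EuclideanSpace ℝ (Fin d) ≃L[ℝ] EuclideanSpace ℝ (Fin d))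
    (h0fix : ∀ i, 1 ≤ i → f i 0 = 0)
    (h0diff : ∀ i, 1 ≤ i → ∀ x ∈ ball (0 : EuclideanSpace ℝ (Fin d)) ρ,
      DifferentiableAt ℝ (f i) x)
    (h1Hol : ∀ i, 1 ≤ i → ∀ x ∈ ball (0 : EuclideanSpace ℝ (Fin d)) ρ,
      ∀ y ∈ ball (0 : EuclideanSpace ℝ (Fin d)) ρ,
        ‖fderiv ℝ (f i) x - fderiv ℝ (f i) y‖ ≤ C * ‖x - y‖ ^ α)
    (h2 : ∀ i, 1 ≤ i → ∀ y ∈ ball (0 : EuclideanSpace ℝ (Fin d)) ρ,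
      μ' < ‖fderiv ℝ (f i) y‖ ∧ ‖fderiv ℝ (f i) y‖ < μ)
    (hA : ∀ i, 1 ≤ i → fderiv ℝ (f i) 0 =
      (A i : EuclideanSpace ℝ (Fin d) →L[ℝ] EuclideanSpace ℝ (Fin d)))
    (h3 : ∀ i, 1 ≤ i →
      ‖(A i : EuclideanSpace ℝ (Fin d) →L[ℝ] EuclideanSpace ℝ (Fin d))‖ *
        ‖((A i).symm : EuclideanSpace ℝ (Fin d) →L[ℝ] EuclideanSpace ℝ (Fin d))‖ ≤ κ) :
    ∃ C₈ > (0 : ℝ),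
      (∀ n, 1 ≤ n →
        C1aDistLE α (ball 0 ρ)
          (fun x => (Lcomp A n).symm (comps f n x))
          (fun x => (Lcomp A (n - 1)).symm (comps f (n - 1) x))
          (C₈ * (κ * μ ^ α) ^ n)) ∧
      ∃ F : EuclideanSpace ℝ (Fin d) → EuclideanSpace ℝ (Fin d),
        ∀ ε > (0 : ℝ), ∃ N, ∀ n ≥ N,
          C1aDistLE α (ball 0 ρ) (fun x => (Lcomp A n).symm (comps f n x)) F ε := by
  have hμ0 : 0 < μ := hμ'0.trans hμ'μ
  have hf : ∀ i, IsAdmissibleMap ρ C μ' μ α (f (i + 1)) (A (i + 1)) := fun i =>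
    have hi : 1 ≤ i + 1 := Nat.le_add_left 1 i
    ⟨h0fix _ hi, h0diff _ hi, hA _ hi, h1Hol _ hi, fun y hy => (h2 _ hi y hy).2,
      hA _ hi ▸ (h2 _ hi 0 (mem_ball_self hρ)).1⟩
  obtain ⟨C₈, hC₈, hstep⟩ := exists_C1aDistLE_Lcomp_symm_comps_succ hf hμ0 hμ1.le hC hα0.le hμ'0
    (Real.rpow_lt_one hμ0.le hμ1 hα0) hρ fun i => h3 (i + 1) (Nat.le_add_left 1 i)
  refine ⟨C₈, hC₈, fun n hn => ?_, ?_⟩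
  · obtain ⟨m, rfl⟩ := Nat.exists_eq_add_of_le' hn
    exact hstep m
  · refine exists_C1aDistLE_limit_of_le_geometric (c := C₈ * (κ * μ ^ α)) isOpen_ball
      (by positivity) hbunch (fun n x hx => differentiableAt_Lcomp_symm_comps hf hμ1.le n hx)
      fun m => ?_
    rw [mul_assoc, ← pow_succ']
    exact hstep m

/-- **Convergence of geometries** (Theorem 4.1): under hypotheses (H0)–(H3') — each `f i`
(`i ≥ 1`) is a `C^{1+α}` diffeomorphism of `B_ρ(0)` onto its image fixing `0`, with
`C^{1+α}` norm `< C`, derivative norms in `(μ', μ)` with `μ < 1`, derivative at the origin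
equal to the invertible linear map `A i` with bunching
`‖A i‖·‖(A i)⁻¹‖ ≤ κ` and `κ·μ^α < 1` — the normalized compositions
`F_n = (Df^n(0))⁻¹ ∘ f^n` converge in `C^{1+α}` on `B_ρ(0)`, with the uniformly
exponential rate `‖F_n − F_{n−1}‖_{C^{1+α}} ≤ C₈·(κ·μ^α)^n`. -/
theorem convergence_of_geometries
    (ρ C μ' μ α κ : ℝ) (hρ : 0 < ρ) (hC : 0 < C)
    (hμ'0 : 0 < μ') (hμ'μ : μ' < μ) (hμ1 : μ < 1)
    (hα0 : 0 < α) (hα1 : α < 1) (hκ1 : 1 ≤ κ) (hbunch : κ * μ ^ α < 1)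
    (f : ℕ → EuclideanSpace ℝ (Fin d) → EuclideanSpace ℝ (Fin d))
    (A : ℕ → EuclideanSpace ℝ (Fin d) ≃L[ℝ] EuclideanSpace ℝ (Fin d))
    (h0fix : ∀ i, 1 ≤ i → f i 0 = 0)
    (h0inj : ∀ i, 1 ≤ i → InjOn (f i) (ball 0 ρ))
    (h0diff : ∀ i, 1 ≤ i → ∀ x ∈ ball (0 : EuclideanSpace ℝ (Fin d)) ρ,
      DifferentiableAt ℝ (f i) x)
    (h1 : ∀ i, 1 ≤ i → ∀ x ∈ ball (0 : EuclideanSpace ℝ (Fin d)) ρ,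
      ‖f i x‖ + ‖fderiv ℝ (f i) x‖ ≤ C)
    (h1Hol : ∀ i, 1 ≤ i → ∀ x ∈ ball (0 : EuclideanSpace ℝ (Fin d)) ρ,
      ∀ y ∈ ball (0 : EuclideanSpace ℝ (Fin d)) ρ,
        ‖fderiv ℝ (f i) x - fderiv ℝ (f i) y‖ ≤ C * ‖x - y‖ ^ α)
    (h2 : ∀ i, 1 ≤ i → ∀ y ∈ ball (0 : EuclideanSpace ℝ (Fin d)) ρ,
      μ' < ‖fderiv ℝ (f i) y‖ ∧ ‖fderiv ℝ (f i) y‖ < μ)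
    (hA : ∀ i, 1 ≤ i → fderiv ℝ (f i) 0 =
      (A i : EuclideanSpace ℝ (Fin d) →L[ℝ] EuclideanSpace ℝ (Fin d)))
    (h3 : ∀ i, 1 ≤ i →
      ‖(A i : EuclideanSpace ℝ (Fin d) →L[ℝ] EuclideanSpace ℝ (Fin d))‖ *
        ‖((A i).symm : EuclideanSpace ℝ (Fin d) →L[ℝ] EuclideanSpace ℝ (Fin d))‖ ≤ κ) :
    ∃ C₈ > (0 : ℝ),
      (∀ n, 1 ≤ n →
        C1aDistLE α (ball 0 ρ)
          (fun x => (Lcomp A n).symm (comps f n x))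
          (fun x => (Lcomp A (n - 1)).symm (comps f (n - 1) x))
          (C₈ * (κ * μ ^ α) ^ n)) ∧
      ∃ F : EuclideanSpace ℝ (Fin d) → EuclideanSpace ℝ (Fin d),
        ∀ ε > (0 : ℝ), ∃ N, ∀ n ≥ N,
          C1aDistLE α (ball 0 ρ) (fun x => (Lcomp A n).symm (comps f n x)) F ε :=
  convergence_of_geometries_general ρ C μ' μ α κ hρ hC hμ'0 hμ'μ hμ1 hα0 hκ1 hbunch f A h0fix h0diff
    h1Hol h2 hA h3

end
end

section
/- Under the hypotheses of the convergence of geometries theorem (sequence {f_i} of C^{1+α} contractions fixing 0 on B_ρ(0) with C^{1+α} norms bounded by C, derivative norms in (μ′, μ) with μ < 1, and bunching ‖Df_i(0)‖_op·‖(Df_i(0))⁻¹‖_op ≤ κ with κ·μ^α < 1), there exist ξ₀ > 0 and constants η₂ < 1 < η₁, depending only on the data (ρ, C, μ, μ′, α, κ, d), such that for every ξ ∈ (0, ξ₀] and every n, η₂·L_n(B_ξ(0)) ⊆ f^n(B_ξ(0)) ⊆ η₁·L_n(B_ξ(0)), where L_n = Df^n(0) and t·L_n(B_ξ(0)) denotes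 the image under L_n of B_{tξ}(0). -/
open Metric Set

noncomputable section

variable {d : ℕ}

/-!
Write `L_m = Df^m(0)` and `g_m = L_{m+1}⁻¹ ∘ f_{m+1} ∘ L_m`, so that
`f^n = L_n ∘ g_{n-1} ∘ ⋯ ∘ g_0`. On `B_{2ξ}(0)` the map `g_m` differs from the identity by an
`ε_m`-Lipschitz map, where `ε_m ≤ ‖L_{m+1}⁻¹‖ ‖L_m‖ · C (μ^m · 2ξ)^α ≤ (Cκ/μ') (2ξ)^α (κ μ^α)^m`:
the Hölder modulus of `Df_{m+1}` is only needed on `L_m(B_{2ξ}(0)) ⊆ B_{2μ^m ξ}(0)`, and `L_m`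
distorts by at most `κ^m`. By bunching the `ε_m` decay geometrically, so `∑ ε_m ≤ 1/2` once `ξ`
is small. A map fixing `0` that is `ε`-close to the identity sends `B_r(0)` into `B_{(1+ε)r}(0)`
and, by the surjectivity part of the inverse function theorem, covers `B_{(1-ε)r}(0)`.
Inductively `L_n(B_{∏(1-ε_j)ξ}(0)) ⊆ f^n(B_ξ(0)) ⊆ L_n(B_{∏(1+ε_j)ξ}(0))`, and both products
lie in `[1/2, 2]`.
-/

open Filter Topology
open scoped NNReal

theorem Finset.one_sub_sum_le_prod_one_sub {ι : Type*} (s : Finset ι) {a : ι → ℝ}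
    (h0 : ∀ i ∈ s, 0 ≤ a i) (h1 : ∀ i ∈ s, a i ≤ 1) :
    1 - ∑ i ∈ s, a i ≤ ∏ i ∈ s, (1 - a i) := by
  induction s using Finset.cons_induction with
  | empty => simp
  | cons i s _ ih =>
    rw [Finset.sum_cons, Finset.prod_cons]
    have hs0 : ∀ j ∈ s, 0 ≤ a j := fun j hj => h0 j (Finset.mem_cons_of_mem hj)
    have hs1 : ∀ j ∈ s, a j ≤ 1 := fun j hj => h1 j (Finset.mem_cons_of_mem hj)
    have hP1 : ∏ j ∈ s, (1 - a j) ≤ 1 :=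
      Finset.prod_le_one (fun j hj => sub_nonneg.2 (hs1 j hj)) fun j hj => by linarith [hs0 j hj]
    nlinarith [ih hs0 hs1, h0 i (Finset.mem_cons_self i s)]

theorem Finset.prod_one_add_mul_prod_one_sub_le_one {ι : Type*} (s : Finset ι) {a : ι → ℝ}
    (h0 : ∀ i ∈ s, 0 ≤ a i) (h1 : ∀ i ∈ s, a i ≤ 1) :
    (∏ i ∈ s, (1 + a i)) * ∏ i ∈ s, (1 - a i) ≤ 1 := by
  rw [← Finset.prod_mul_distrib]
  refine Finset.prod_le_one (fun i hi => ?_) fun i hi => ?_ <;> nlinarith [h0 i hi, h1 i hi]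

theorem exists_pos_lt_and_mul_rpow_le {ρ α ε : ℝ} (hρ : 0 < ρ) (hα : 0 < α) (hε : 0 < ε)
    (K : ℝ) : ∃ t, 0 < t ∧ t < ρ ∧ K * t ^ α ≤ ε := by
  have hlim : Tendsto (fun t : ℝ => K * t ^ α) (𝓝[>] 0) (𝓝 0) := by
    have hcont : Continuous fun t : ℝ => K * t ^ α :=
      continuous_const.mul (Real.continuous_rpow_const hα.le)
    simpa [Real.zero_rpow hα.ne'] using (hcont.tendsto 0).mono_left nhdsWithin_le_nhds
  have hρ' : ∀ᶠ t in 𝓝[>] 0, t < ρ := (eventually_lt_nhds hρ).filter_mono nhdsWithin_le_nhds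
  obtain ⟨t, ht, htρ, hKt⟩ :=
    (eventually_mem_nhdsWithin.and (hρ'.and (hlim.eventually (ge_mem_nhds hε)))).exists
  exact ⟨t, ht, htρ, hKt⟩

theorem sum_toNNReal_geometric_le_half {δ β : ℝ} (hδ0 : 0 ≤ δ) (hβ0 : 0 ≤ β) (hβ1 : β < 1)
    (hδ : δ ≤ (1 - β) / 2) (n : ℕ) : ∑ j ∈ Finset.range n, ((δ * β ^ j).toNNReal : ℝ) ≤ 1 / 2 :=
  calc ∑ j ∈ Finset.range n, ((δ * β ^ j).toNNReal : ℝ) = δ * ∑ j ∈ Finset.range n, β ^ j := by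
        rw [Finset.mul_sum]
        exact Finset.sum_congr rfl fun j _ => Real.coe_toNNReal _ (by positivity)
    _ ≤ (1 - β) / 2 * (1 / (1 - β)) := by
        refine mul_le_mul hδ ?_ (Finset.sum_nonneg fun j _ => by positivity) (by linarith)
        simpa using geom_sum_Ico_le_of_lt_one (m := 0) (n := n) hβ0 hβ1
    _ = 1 / 2 := by field_simp [(by linarith : (1 - β) ≠ 0)]

section ApproximatesLinearOn

variable {D E F G : Type*} [NormedAddCommGroup D] [NormedSpace ℝ D] [NormedAddCommGroup E]
  [NormedSpace ℝ E] [NormedAddCommGroup F] [NormedSpace ℝ F] [NormedAddCommGroup G]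
  [NormedSpace ℝ G]

theorem ContinuousLinearEquiv.opNorm_trans_le (e₁ : E ≃L[ℝ] F) (e₂ : F ≃L[ℝ] G) :
    ‖((e₁.trans e₂ : E ≃L[ℝ] G) : E →L[ℝ] G)‖ ≤ ‖(e₂ : F →L[ℝ] G)‖ * ‖(e₁ : E →L[ℝ] F)‖ := by
  rw [← ContinuousLinearEquiv.comp_coe]
  exact ContinuousLinearMap.opNorm_comp_le _ _

theorem approximatesLinearOn_of_norm_fderiv_sub_le {f : E → F} {A : E →L[ℝ] F} {s : Set E}
    {c : ℝ≥0} (hs : Convex ℝ s) (hf : ∀ x ∈ s, DifferentiableAt ℝ f x)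
    (hbound : ∀ x ∈ s, ‖fderiv ℝ f x - A‖ ≤ c) : ApproximatesLinearOn f A s c :=
  fun _ hx _ hy => hs.norm_image_sub_le_of_norm_fderiv_le' hf hbound hy hx

theorem ApproximatesLinearOn.clm_comp_comp_clm {f : E → F} {A : E →L[ℝ] F} {t : Set E}
    {c : ℝ≥0} (hf : ApproximatesLinearOn f A t c) (P : F →L[ℝ] G) (L : D →L[ℝ] E) :
    ApproximatesLinearOn (fun x => P (f (L x))) (P.comp (A.comp L)) (L ⁻¹' t)
      (‖P‖₊ * c * ‖L‖₊) := by
  intro x hx y hy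
  calc ‖P (f (L x)) - P (f (L y)) - P (A (L (x - y)))‖
      = ‖P (f (L x) - f (L y) - A (L x - L y))‖ := by simp only [map_sub]
    _ ≤ ‖P‖ * (c * ‖L x - L y‖) := P.le_opNorm_of_le (hf _ hx _ hy)
    _ ≤ ‖P‖ * (c * (‖L‖ * ‖x - y‖)) := by
      rw [← map_sub]; gcongr; exact L.le_opNorm _
    _ = ↑(‖P‖₊ * c * ‖L‖₊) * ‖x - y‖ := by push_cast; ring

variable {g : E → E} {s : Set E} {c : ℝ≥0} {r : ℝ}

theorem ApproximatesLinearOn.image_ball_subset_ball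
    (hg : ApproximatesLinearOn g (ContinuousLinearMap.id ℝ E) s c) (hg0 : g 0 = 0)
    (hr : ball 0 r ⊆ s) : g '' ball 0 r ⊆ ball 0 ((1 + c) * r) := by
  rintro _ ⟨y, hy, rfl⟩
  have h0 : (0 : E) ∈ ball 0 r := mem_ball_self ((norm_nonneg y).trans_lt (mem_ball_zero_iff.1 hy))
  have hclose := hg _ (hr hy) _ (hr h0)
  simp only [hg0, sub_zero, ContinuousLinearMap.id_apply] at hclose
  rw [mem_ball_zero_iff] at hy ⊢
  calc ‖g y‖ ≤ ‖g y - y‖ + ‖y‖ := norm_le_norm_sub_add _ _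
    _ ≤ (1 + c) * ‖y‖ := by linarith
    _ < (1 + c) * r := by gcongr

theorem ApproximatesLinearOn.ball_subset_image_ball [CompleteSpace E]
    (hg : ApproximatesLinearOn g (ContinuousLinearMap.id ℝ E) s c) (hg0 : g 0 = 0) (hc : c < 1)
    (hr : ball 0 r ⊆ s) : ball 0 ((1 - c) * r) ⊆ g '' ball 0 r := by
  intro w hw
  rw [mem_ball_zero_iff] at hw
  have hc' : (0 : ℝ) < 1 - c := sub_pos.2 (by exact_mod_cast hc)
  have ht : ‖w‖ / (1 - c) < r := by rwa [div_lt_iff₀ hc', mul_comm]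
  -- `ContinuousLinearEquiv.toNonlinearRightInverse` would carry the bound `‖id‖`, which is `0` on
  -- the trivial space.
  let idInv : (ContinuousLinearMap.id ℝ E).NonlinearRightInverse :=
    ⟨id, 1, fun y => by simp, fun _ => rfl⟩
  have hw' : w ∈ closedBall (g 0) (((idInv.nnnorm : ℝ)⁻¹ - c) * (‖w‖ / (1 - c))) := by
    simp [hg0, idInv, mul_div_cancel₀ _ hc'.ne']
  obtain ⟨y, hy, rfl⟩ := hg.surjOn_closedBall_of_nonlinearRightInverse idInv (by positivity)
    ((closedBall_subset_ball ht).trans hr) hw'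
  exact ⟨y, closedBall_subset_ball ht hy, rfl⟩

end ApproximatesLinearOn

local notation "𝔼" n:max => EuclideanSpace ℝ (Fin n)

section Composition

variable {f : ℕ → 𝔼 d → 𝔼 d} {A : ℕ → 𝔼 d ≃L[ℝ] 𝔼 d}

theorem norm_Lcomp_succ_le (n : ℕ) :
    ‖(Lcomp A (n + 1)).toContinuousLinearMap‖ ≤
      ‖(A (n + 1)).toContinuousLinearMap‖ * ‖(Lcomp A n).toContinuousLinearMap‖ :=
  ContinuousLinearEquiv.opNorm_trans_le (Lcomp A n) (A (n + 1))

theorem norm_Lcomp_succ_symm_le (n : ℕ) :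
    ‖(Lcomp A (n + 1)).symm.toContinuousLinearMap‖ ≤
      ‖(Lcomp A n).symm.toContinuousLinearMap‖ * ‖(A (n + 1)).symm.toContinuousLinearMap‖ :=
  ContinuousLinearEquiv.opNorm_trans_le (A (n + 1)).symm (Lcomp A n).symm

theorem norm_Lcomp_le {μ : ℝ} (hA : ∀ i : ℕ, 1 ≤ i → ‖(A i).toContinuousLinearMap‖ ≤ μ) :
    ∀ n, ‖(Lcomp A n).toContinuousLinearMap‖ ≤ μ ^ n
  | 0 => by simpa [Lcomp] using ContinuousLinearMap.norm_id_le
  | n + 1 => by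
    have hμ : 0 ≤ μ := (norm_nonneg _).trans (hA (n + 1) le_add_self)
    calc ‖(Lcomp A (n + 1)).toContinuousLinearMap‖
        ≤ ‖(A (n + 1)).toContinuousLinearMap‖ * ‖(Lcomp A n).toContinuousLinearMap‖ :=
          norm_Lcomp_succ_le n
      _ ≤ μ * μ ^ n := by gcongr; exacts [hA (n + 1) le_add_self, norm_Lcomp_le hA n]
      _ = μ ^ (n + 1) := (pow_succ' μ n).symm

theorem norm_Lcomp_symm_mul_norm_Lcomp_le {κ : ℝ}
    (hA : ∀ i : ℕ, 1 ≤ i →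
      ‖(A i).toContinuousLinearMap‖ * ‖(A i).symm.toContinuousLinearMap‖ ≤ κ) :
    ∀ n, ‖(Lcomp A n).symm.toContinuousLinearMap‖ * ‖(Lcomp A n).toContinuousLinearMap‖ ≤
      κ ^ n
  | 0 => by
    simpa [Lcomp] using mul_le_one₀ ContinuousLinearMap.norm_id_le (norm_nonneg _)
      ContinuousLinearMap.norm_id_le
  | n + 1 => by
    have hκ : 0 ≤ κ := (by positivity : (0 : ℝ) ≤ _ * _).trans (hA (n + 1) le_add_self)
    calc ‖(Lcomp A (n + 1)).symm.toContinuousLinearMap‖ *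
          ‖(Lcomp A (n + 1)).toContinuousLinearMap‖
        ≤ (‖(Lcomp A n).symm.toContinuousLinearMap‖ *
            ‖(A (n + 1)).symm.toContinuousLinearMap‖) *
          (‖(A (n + 1)).toContinuousLinearMap‖ * ‖(Lcomp A n).toContinuousLinearMap‖) :=
          mul_le_mul (norm_Lcomp_succ_symm_le n) (norm_Lcomp_succ_le n) (norm_nonneg _)
            (by positivity)
      _ = (‖(A (n + 1)).toContinuousLinearMap‖ *
            ‖(A (n + 1)).symm.toContinuousLinearMap‖) *
          (‖(Lcomp A n).symm.toContinuousLinearMap‖ * ‖(Lcomp A n).toContinuousLinearMap‖) := by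
          ring
      _ ≤ κ * κ ^ n := by
          gcongr; exacts [hA (n + 1) le_add_self, norm_Lcomp_symm_mul_norm_Lcomp_le hA n]
      _ = κ ^ (n + 1) := (pow_succ' κ n).symm

theorem norm_Lcomp_succ_symm_mul_norm_Lcomp_le {μ' κ : ℝ} (hμ' : 0 < μ')
    (hA : ∀ i : ℕ, 1 ≤ i → μ' < ‖(A i).toContinuousLinearMap‖)
    (hκ : ∀ i : ℕ, 1 ≤ i →
      ‖(A i).toContinuousLinearMap‖ * ‖(A i).symm.toContinuousLinearMap‖ ≤ κ) (m : ℕ) :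
    ‖(Lcomp A (m + 1)).symm.toContinuousLinearMap‖ * ‖(Lcomp A m).toContinuousLinearMap‖ ≤
      κ / μ' * κ ^ m := by
  have hAsymm : ‖(A (m + 1)).symm.toContinuousLinearMap‖ ≤ κ / μ' := by
    rw [le_div_iff₀ hμ', mul_comm]
    exact (mul_le_mul_of_nonneg_right (hA (m + 1) le_add_self).le (norm_nonneg _)).trans
      (hκ (m + 1) le_add_self)
  calc ‖(Lcomp A (m + 1)).symm.toContinuousLinearMap‖ * ‖(Lcomp A m).toContinuousLinearMap‖
      ≤ (‖(Lcomp A m).symm.toContinuousLinearMap‖ *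
          ‖(A (m + 1)).symm.toContinuousLinearMap‖) * ‖(Lcomp A m).toContinuousLinearMap‖ := by
        gcongr; exact norm_Lcomp_succ_symm_le m
    _ = ‖(A (m + 1)).symm.toContinuousLinearMap‖ *
        (‖(Lcomp A m).symm.toContinuousLinearMap‖ * ‖(Lcomp A m).toContinuousLinearMap‖) := by
        ring
    _ ≤ κ / μ' * κ ^ m := by
        gcongr
        · exact (norm_nonneg _).trans hAsymm
        · exact norm_Lcomp_symm_mul_norm_Lcomp_le hκ m

def normalizedStep (f : ℕ → 𝔼 d → 𝔼 d) (A : ℕ → 𝔼 d ≃L[ℝ] 𝔼 d) (m : ℕ) (y : 𝔼 d) : 𝔼 d :=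
  (Lcomp A (m + 1)).symm (f (m + 1) (Lcomp A m y))

theorem normalizedStep_zero {m : ℕ} (hf0 : f (m + 1) 0 = 0) : normalizedStep f A m 0 = 0 := by
  simp [normalizedStep, hf0]

theorem image_comps_succ (n : ℕ) (s : Set (𝔼 d)) :
    comps f (n + 1) '' s = f (n + 1) '' (comps f n '' s) :=
  image_comp _ _ _

theorem image_Lcomp_succ_normalizedStep (m : ℕ) (s : Set (𝔼 d)) :
    Lcomp A (m + 1) '' (normalizedStep f A m '' s) = f (m + 1) '' (Lcomp A m '' s) := by
  simp only [image_image, normalizedStep, ContinuousLinearEquiv.apply_symm_apply]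

variable {ε : ℕ → ℝ≥0} {s : Set (𝔼 d)} {r : ℝ}

theorem image_comps_ball_subset (hf0 : ∀ m, f (m + 1) 0 = 0)
    (happrox : ∀ m, ApproximatesLinearOn (normalizedStep f A m) (ContinuousLinearMap.id ℝ (𝔼 d))
      s (ε m))
    (hs : ∀ n, ball 0 ((∏ j ∈ Finset.range n, (1 + (ε j : ℝ))) * r) ⊆ s) :
    ∀ n, comps f n '' ball 0 r ⊆
      Lcomp A n '' ball 0 ((∏ j ∈ Finset.range n, (1 + (ε j : ℝ))) * r)
  | 0 => by simp [comps, Lcomp]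
  | m + 1 => by
    calc comps f (m + 1) '' ball 0 r = f (m + 1) '' (comps f m '' ball 0 r) :=
          image_comps_succ m _
      _ ⊆ f (m + 1) '' (Lcomp A m '' ball 0 ((∏ j ∈ Finset.range m, (1 + (ε j : ℝ))) * r)) :=
        image_mono (image_comps_ball_subset hf0 happrox hs m)
      _ = Lcomp A (m + 1) '' (normalizedStep f A m ''
            ball 0 ((∏ j ∈ Finset.range m, (1 + (ε j : ℝ))) * r)) :=
        (image_Lcomp_succ_normalizedStep m _).symm
      _ ⊆ Lcomp A (m + 1) ''
            ball 0 ((1 + ε m) * ((∏ j ∈ Finset.range m, (1 + (ε j : ℝ))) * r)) :=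
        image_mono ((happrox m).image_ball_subset_ball (normalizedStep_zero (hf0 m)) (hs m))
      _ = _ := by rw [Finset.prod_range_succ, mul_comm _ (1 + _), mul_assoc]

theorem ball_subset_image_comps (hf0 : ∀ m, f (m + 1) 0 = 0)
    (happrox : ∀ m, ApproximatesLinearOn (normalizedStep f A m) (ContinuousLinearMap.id ℝ (𝔼 d))
      s (ε m))
    (hε : ∀ m, ε m < 1) (hs : ball 0 r ⊆ s) (hr : 0 ≤ r) :
    ∀ n, Lcomp A n '' ball 0 ((∏ j ∈ Finset.range n, (1 - (ε j : ℝ))) * r) ⊆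
      comps f n '' ball 0 r
  | 0 => by simp [comps, Lcomp]
  | m + 1 => by
    have hprod : ∏ j ∈ Finset.range m, (1 - (ε j : ℝ)) ≤ 1 :=
      Finset.prod_le_one (fun j _ => sub_nonneg.2 (by exact_mod_cast (hε j).le))
        fun j _ => sub_le_self _ (ε j).2
    have hball : ball 0 ((∏ j ∈ Finset.range m, (1 - (ε j : ℝ))) * r) ⊆ s :=
      (ball_subset_ball (mul_le_of_le_one_left hr hprod)).trans hs
    calc Lcomp A (m + 1) '' ball 0 ((∏ j ∈ Finset.range (m + 1), (1 - (ε j : ℝ))) * r)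
        = Lcomp A (m + 1) ''
            ball 0 ((1 - ε m) * ((∏ j ∈ Finset.range m, (1 - (ε j : ℝ))) * r)) := by
          rw [Finset.prod_range_succ, mul_comm _ (1 - _), mul_assoc]
      _ ⊆ Lcomp A (m + 1) '' (normalizedStep f A m ''
            ball 0 ((∏ j ∈ Finset.range m, (1 - (ε j : ℝ))) * r)) :=
        image_mono
          ((happrox m).ball_subset_image_ball (normalizedStep_zero (hf0 m)) (hε m) hball)
      _ = f (m + 1) '' (Lcomp A m '' ball 0 ((∏ j ∈ Finset.range m, (1 - (ε j : ℝ))) * r)) :=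
        image_Lcomp_succ_normalizedStep m _
      _ ⊆ f (m + 1) '' (comps f m '' ball 0 r) :=
        image_mono (ball_subset_image_comps hf0 happrox hε hs hr m)
      _ = comps f (m + 1) '' ball 0 r := (image_comps_succ m _).symm

theorem comps_image_ball_sandwich (hf0 : ∀ m, f (m + 1) 0 = 0)
    (happrox : ∀ m, ApproximatesLinearOn (normalizedStep f A m) (ContinuousLinearMap.id ℝ (𝔼 d))
      (closedBall 0 (2 * r)) (ε m))
    (hsum : ∀ n, ∑ j ∈ Finset.range n, (ε j : ℝ) ≤ 1 / 2) (hr : 0 ≤ r) (n : ℕ) :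
    Lcomp A n '' ball 0 (1 / 2 * r) ⊆ comps f n '' ball 0 r ∧
      comps f n '' ball 0 r ⊆ Lcomp A n '' ball 0 (2 * r) := by
  have hε : ∀ j, (ε j : ℝ) ≤ 1 / 2 := fun j =>
    (Finset.single_le_sum (fun i _ => (ε i).2) (Finset.self_mem_range_succ j)).trans
      (hsum (j + 1))
  have hε0 : ∀ n, ∀ j ∈ Finset.range n, 0 ≤ (ε j : ℝ) := fun _ j _ => (ε j).2
  have hε1 : ∀ n, ∀ j ∈ Finset.range n, (ε j : ℝ) ≤ 1 := fun _ j _ => (hε j).trans (by norm_num)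
  have hlo : ∀ n, 1 / 2 ≤ ∏ j ∈ Finset.range n, (1 - (ε j : ℝ)) := fun n => by
    linarith [hsum n, (Finset.range n).one_sub_sum_le_prod_one_sub (hε0 n) (hε1 n)]
  have hhi : ∀ n, ∏ j ∈ Finset.range n, (1 + (ε j : ℝ)) ≤ 2 := fun n => by
    nlinarith [hlo n, (Finset.range n).prod_one_add_mul_prod_one_sub_le_one (hε0 n) (hε1 n),
      Finset.prod_nonneg fun j hj => add_nonneg zero_le_one (hε0 n j hj)]
  constructor
  · refine (image_mono (ball_subset_ball ?_)).trans
      (ball_subset_image_comps hf0 happrox (fun m => ?_)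
        (ball_subset_closedBall.trans (closedBall_subset_closedBall (by linarith))) hr n)
    · exact mul_le_mul_of_nonneg_right (hlo n) hr
    · exact_mod_cast (hε m).trans_lt (by norm_num)
  · refine (image_comps_ball_subset hf0 happrox (fun m => ?_) n).trans
      (image_mono (ball_subset_ball (mul_le_mul_of_nonneg_right (hhi n) hr)))
    exact ball_subset_closedBall.trans
      (closedBall_subset_closedBall (mul_le_mul_of_nonneg_right (hhi m) hr))

theorem approximatesLinearOn_normalizedStep {ρ C α R : ℝ} {c : ℝ≥0} {m : ℕ}
    (hdiff : ∀ x ∈ ball (0 : 𝔼 d) ρ, DifferentiableAt ℝ (f (m + 1)) x)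
    (hhol : ∀ x ∈ ball (0 : 𝔼 d) ρ,
      ‖fderiv ℝ (f (m + 1)) x - (A (m + 1)).toContinuousLinearMap‖ ≤ C * ‖x‖ ^ α)
    (hC : 0 ≤ C) (hα : 0 ≤ α) (hR0 : 0 ≤ R)
    (hR : ‖(Lcomp A m).toContinuousLinearMap‖ * R < ρ)
    (hc : ‖(Lcomp A (m + 1)).symm.toContinuousLinearMap‖ *
      (C * (‖(Lcomp A m).toContinuousLinearMap‖ * R) ^ α) *
      ‖(Lcomp A m).toContinuousLinearMap‖ ≤ c) :
    ApproximatesLinearOn (normalizedStep f A m) (ContinuousLinearMap.id ℝ (𝔼 d))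
      (closedBall 0 R) c := by
  set L := (Lcomp A m).toContinuousLinearMap
  have hsub : closedBall (0 : 𝔼 d) (‖L‖ * R) ⊆ ball 0 ρ := closedBall_subset_ball hR
  have hf : ApproximatesLinearOn (f (m + 1)) (A (m + 1)).toContinuousLinearMap
      (closedBall 0 (‖L‖ * R)) (C * (‖L‖ * R) ^ α).toNNReal := by
    refine approximatesLinearOn_of_norm_fderiv_sub_le (convex_closedBall _ _)
      (fun x hx => hdiff x (hsub hx)) fun x hx => (hhol x (hsub hx)).trans ?_
    rw [Real.coe_toNNReal _ (by positivity)]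
    gcongr
    exact mem_closedBall_zero_iff.1 hx
  have hid : (Lcomp A (m + 1)).symm.toContinuousLinearMap.comp
      ((A (m + 1)).toContinuousLinearMap.comp L) = ContinuousLinearMap.id ℝ (𝔼 d) := by
    ext1 x; simp [L, Lcomp]
  have hconj := hf.clm_comp_comp_clm (Lcomp A (m + 1)).symm.toContinuousLinearMap L
  rw [hid] at hconj
  refine (hconj.mono_set fun x hx => ?_).mono_num ?_
  · exact mem_closedBall_zero_iff.2 (L.le_opNorm_of_le (mem_closedBall_zero_iff.1 hx))
  · rw [← NNReal.coe_le_coe]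
    push_cast
    rwa [Real.coe_toNNReal _ (by positivity)]

theorem approximatesLinearOn_normalizedStep_of_bunching {ρ C μ' μ α κ ξ : ℝ} (hC : 0 ≤ C)
    (hα : 0 ≤ α) (hμ' : 0 < μ') (hμ1 : μ ≤ 1) (hξ : 0 ≤ ξ) (hξρ : 2 * ξ < ρ)
    (hdiff : ∀ i : ℕ, 1 ≤ i → ∀ x ∈ ball (0 : 𝔼 d) ρ, DifferentiableAt ℝ (f i) x)
    (hhol : ∀ i : ℕ, 1 ≤ i → ∀ x ∈ ball (0 : 𝔼 d) ρ,
      ‖fderiv ℝ (f i) x - (A i).toContinuousLinearMap‖ ≤ C * ‖x‖ ^ α)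
    (hA : ∀ i : ℕ, 1 ≤ i →
      μ' < ‖(A i).toContinuousLinearMap‖ ∧ ‖(A i).toContinuousLinearMap‖ ≤ μ)
    (hκ : ∀ i : ℕ, 1 ≤ i →
      ‖(A i).toContinuousLinearMap‖ * ‖(A i).symm.toContinuousLinearMap‖ ≤ κ) (m : ℕ) :
    ApproximatesLinearOn (normalizedStep f A m) (ContinuousLinearMap.id ℝ (𝔼 d))
      (closedBall 0 (2 * ξ)) (C * κ / μ' * (2 * ξ) ^ α * (κ * μ ^ α) ^ m).toNNReal := by
  have hμ0 : 0 ≤ μ := (norm_nonneg _).trans (hA 1 le_rfl).2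
  have hκ0 : 0 ≤ κ := (by positivity : (0 : ℝ) ≤ _ * _).trans (hκ 1 le_rfl)
  have hL : ‖(Lcomp A m).toContinuousLinearMap‖ ≤ μ ^ m :=
    norm_Lcomp_le (fun i hi => (hA i hi).2) m
  have hμm : μ ^ m ≤ 1 := pow_le_one₀ hμ0 hμ1
  refine approximatesLinearOn_normalizedStep (hdiff _ le_add_self) (hhol _ le_add_self) hC hα
    (by positivity) (by nlinarith [norm_nonneg (Lcomp A m).toContinuousLinearMap]) ?_
  calc ‖(Lcomp A (m + 1)).symm.toContinuousLinearMap‖ *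
        (C * (‖(Lcomp A m).toContinuousLinearMap‖ * (2 * ξ)) ^ α) *
        ‖(Lcomp A m).toContinuousLinearMap‖
      = (‖(Lcomp A (m + 1)).symm.toContinuousLinearMap‖ *
          ‖(Lcomp A m).toContinuousLinearMap‖) *
        (C * (‖(Lcomp A m).toContinuousLinearMap‖ * (2 * ξ)) ^ α) := by ring
    _ ≤ (κ / μ' * κ ^ m) * (C * (μ ^ m * (2 * ξ)) ^ α) :=
        mul_le_mul (norm_Lcomp_succ_symm_mul_norm_Lcomp_le hμ' (fun i hi => (hA i hi).1) hκ m)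
          (by gcongr) (by positivity) (by positivity)
    _ = C * κ / μ' * (2 * ξ) ^ α * (κ * μ ^ α) ^ m := by
        rw [Real.mul_rpow (by positivity) (by positivity), ← Real.rpow_pow_comm hμ0]
        ring
    _ ≤ _ := Real.le_coe_toNNReal _

end Composition

theorem control_of_shape_general
    (d : ℕ) (ρ C μ' μ α κ : ℝ) (hρ : 0 < ρ) (hC : 0 < C)
    (hμ'0 : 0 < μ') (hμ'μ : μ' < μ) (hμ1 : μ < 1)
    (hα0 : 0 < α) (hκ1 : 1 ≤ κ) (hbunch : κ * μ ^ α < 1) :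
    ∃ ξ₀ η₁ η₂ : ℝ, 0 < ξ₀ ∧ 1 < η₁ ∧ 0 < η₂ ∧ η₂ < 1 ∧
      ∀ (f : ℕ → EuclideanSpace ℝ (Fin d) → EuclideanSpace ℝ (Fin d))
        (A : ℕ → EuclideanSpace ℝ (Fin d) ≃L[ℝ] EuclideanSpace ℝ (Fin d)),
        (∀ i, 1 ≤ i → f i 0 = 0) →
        (∀ i, 1 ≤ i → InjOn (f i) (ball 0 ρ)) →
        (∀ i, 1 ≤ i → ∀ x ∈ ball (0 : EuclideanSpace ℝ (Fin d)) ρ,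
          DifferentiableAt ℝ (f i) x) →
        (∀ i, 1 ≤ i → ∀ x ∈ ball (0 : EuclideanSpace ℝ (Fin d)) ρ,
          ‖f i x‖ + ‖fderiv ℝ (f i) x‖ ≤ C) →
        (∀ i, 1 ≤ i → ∀ x ∈ ball (0 : EuclideanSpace ℝ (Fin d)) ρ,
          ∀ y ∈ ball (0 : EuclideanSpace ℝ (Fin d)) ρ,
            ‖fderiv ℝ (f i) x - fderiv ℝ (f i) y‖ ≤ C * ‖x - y‖ ^ α) →
        (∀ i, 1 ≤ i → ∀ y ∈ ball (0 : EuclideanSpace ℝ (Fin d)) ρ,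
          μ' < ‖fderiv ℝ (f i) y‖ ∧ ‖fderiv ℝ (f i) y‖ < μ) →
        (∀ i, 1 ≤ i → fderiv ℝ (f i) 0 =
          (A i : EuclideanSpace ℝ (Fin d) →L[ℝ] EuclideanSpace ℝ (Fin d))) →
        (∀ i, 1 ≤ i →
          ‖(A i : EuclideanSpace ℝ (Fin d) →L[ℝ] EuclideanSpace ℝ (Fin d))‖ *
            ‖((A i).symm : EuclideanSpace ℝ (Fin d) →L[ℝ] EuclideanSpace ℝ (Fin d))‖ ≤ κ) →
        ∀ ξ : ℝ, 0 < ξ → ξ ≤ ξ₀ → ∀ n : ℕ,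
          (Lcomp A n) '' ball 0 (η₂ * ξ) ⊆ comps f n '' ball 0 ξ ∧
          comps f n '' ball 0 ξ ⊆ (Lcomp A n) '' ball 0 (η₁ * ξ) := by
  have hβ0 : 0 ≤ κ * μ ^ α := mul_nonneg (by linarith) (Real.rpow_nonneg (by linarith) α)
  obtain ⟨t, ht0, htρ, htK⟩ := exists_pos_lt_and_mul_rpow_le hρ hα0
    (by linarith : 0 < (1 - κ * μ ^ α) / 2) (C * κ / μ')
  refine ⟨t / 2, 2, 1 / 2, by positivity, one_lt_two, one_half_pos, one_half_lt_one, ?_⟩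
  intro f A hf0 _ hdiff _ hhol hderiv hA hκ ξ hξ hξt n
  have hnorm : ∀ i : ℕ, 1 ≤ i →
      μ' < ‖(A i).toContinuousLinearMap‖ ∧ ‖(A i).toContinuousLinearMap‖ ≤ μ := fun i hi => by
    have h := hderiv i hi 0 (mem_ball_self hρ)
    rw [hA i hi] at h
    exact ⟨h.1, h.2.le⟩
  have hhol0 : ∀ i : ℕ, 1 ≤ i → ∀ x ∈ ball (0 : EuclideanSpace ℝ (Fin d)) ρ,
      ‖fderiv ℝ (f i) x - (A i).toContinuousLinearMap‖ ≤ C * ‖x‖ ^ α := fun i hi x hx => by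
    simpa [hA i hi] using hhol i hi x hx 0 (mem_ball_self hρ)
  have hδ : C * κ / μ' * (2 * ξ) ^ α ≤ (1 - κ * μ ^ α) / 2 :=
    le_trans (by gcongr; linarith) htK
  exact comps_image_ball_sandwich (fun m => hf0 (m + 1) le_add_self)
    (approximatesLinearOn_normalizedStep_of_bunching hC.le hα0.le hμ'0 hμ1.le hξ.le
      (by linarith) hdiff hhol0 hnorm hκ)
    (sum_toNNReal_geometric_le_half (by positivity) hβ0 hbunch hδ) hξ.le n

/-- **Control of shape** (Corollary 4.2): with constants depending only on the data
`(ρ, C, μ', μ, α, κ, d)`, there are `ξ₀ > 0` and `η₂ < 1 < η₁` such that for every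
sequence `{f i}` satisfying (H0)–(H3') (with derivative at `0` given by the invertible
map `A i`), every `ξ ∈ (0, ξ₀]` and every `n`,
`η₂·L_n(B_ξ(0)) ⊆ f^n(B_ξ(0)) ⊆ η₁·L_n(B_ξ(0))`, where `L_n = Df^n(0) = A n ∘ ⋯ ∘ A 1`
and `t·L_n(B_ξ(0)) = L_n(B_{tξ}(0))`. -/
theorem control_of_shape
    (d : ℕ) (ρ C μ' μ α κ : ℝ) (hρ : 0 < ρ) (hC : 0 < C)
    (hμ'0 : 0 < μ') (hμ'μ : μ' < μ) (hμ1 : μ < 1)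
    (hα0 : 0 < α) (hα1 : α < 1) (hκ1 : 1 ≤ κ) (hbunch : κ * μ ^ α < 1) :
    ∃ ξ₀ η₁ η₂ : ℝ, 0 < ξ₀ ∧ 1 < η₁ ∧ 0 < η₂ ∧ η₂ < 1 ∧
      ∀ (f : ℕ → EuclideanSpace ℝ (Fin d) → EuclideanSpace ℝ (Fin d))
        (A : ℕ → EuclideanSpace ℝ (Fin d) ≃L[ℝ] EuclideanSpace ℝ (Fin d)),
        (∀ i, 1 ≤ i → f i 0 = 0) →
        (∀ i, 1 ≤ i → InjOn (f i) (ball 0 ρ)) →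
        (∀ i, 1 ≤ i → ∀ x ∈ ball (0 : EuclideanSpace ℝ (Fin d)) ρ,
          DifferentiableAt ℝ (f i) x) →
        (∀ i, 1 ≤ i → ∀ x ∈ ball (0 : EuclideanSpace ℝ (Fin d)) ρ,
          ‖f i x‖ + ‖fderiv ℝ (f i) x‖ ≤ C) →
        (∀ i, 1 ≤ i → ∀ x ∈ ball (0 : EuclideanSpace ℝ (Fin d)) ρ,
          ∀ y ∈ ball (0 : EuclideanSpace ℝ (Fin d)) ρ,
            ‖fderiv ℝ (f i) x - fderiv ℝ (f i) y‖ ≤ C * ‖x - y‖ ^ α) →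
        (∀ i, 1 ≤ i → ∀ y ∈ ball (0 : EuclideanSpace ℝ (Fin d)) ρ,
          μ' < ‖fderiv ℝ (f i) y‖ ∧ ‖fderiv ℝ (f i) y‖ < μ) →
        (∀ i, 1 ≤ i → fderiv ℝ (f i) 0 =
          (A i : EuclideanSpace ℝ (Fin d) →L[ℝ] EuclideanSpace ℝ (Fin d))) →
        (∀ i, 1 ≤ i →
          ‖(A i : EuclideanSpace ℝ (Fin d) →L[ℝ] EuclideanSpace ℝ (Fin d))‖ *
            ‖((A i).symm : EuclideanSpace ℝ (Fin d) →L[ℝ] EuclideanSpace ℝ (Fin d))‖ ≤ κ) →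
        ∀ ξ : ℝ, 0 < ξ → ξ ≤ ξ₀ → ∀ n : ℕ,
          (Lcomp A n) '' ball 0 (η₂ * ξ) ⊆ comps f n '' ball 0 ξ ∧
          comps f n '' ball 0 ξ ⊆ (Lcomp A n) '' ball 0 (η₁ * ξ) :=
  control_of_shape_general d ρ C μ' μ α κ hρ hC hμ'0 hμ'μ hμ1 hα0 hκ1 hbunch
end
end

section
/- Let N ≥ 7 and δ > 0 sufficiently small, and define affine self-maps of ℝ² = ℝ × ℝ: G_{j,1}(s,t) = (N s, N t − (j−1)) and G_{j,2}(s,t) = (N s, N t − (N−j)) for j = 1,2,3, and F₁(s,t) = (s/2, t), F₂(s,t) = (s/2, t + s/2). Let W₁ be the interior of the convex hull of the four points (1, 2/(N−1) − 1 + δ), (1, (N−3)/(N−1) − δ), (2N+1, (N−3)/(N−1) − 2δ), (2N+1, 2/(N−1) − (2N+1) + 2δ). Then for each j ∈ {1,2,3}, the closure of W₁ is contained in F₁⁻¹(W₁) ∪ F₂⁻¹(W₁) ∪ G_{j,1}⁻¹(W₁) ∪ G_{j,2}⁻¹(W₁). -/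
open Set

noncomputable section

/-- `F₁(s,t) = (s/2, t)`. -/
def F1 : ℝ × ℝ → ℝ × ℝ := fun p => (p.1 / 2, p.2)

/-- `F₂(s,t) = (s/2, t + s/2)`. -/
def F2 : ℝ × ℝ → ℝ × ℝ := fun p => (p.1 / 2, p.2 + p.1 / 2)

/-- `G_{j,1}(s,t) = (N s, N t − (j−1))` and `G_{j,2}(s,t) = (N s, N t − (N−j))` for
`j = 1, 2, 3` (here `j : Fin 3` stands for `j − 1 ∈ {0,1,2}`). -/
def Gmap (N : ℕ) (j : Fin 3) : Fin 2 → ℝ × ℝ → ℝ × ℝ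
  | 0 => fun p => ((N : ℝ) * p.1, (N : ℝ) * p.2 - ((j : ℕ) : ℝ))
  | 1 => fun p => ((N : ℝ) * p.1, (N : ℝ) * p.2 - ((N : ℝ) - (((j : ℕ) : ℝ) + 1)))

/-- The open region `W₁`: interior of the convex hull of the four points
`(a, 2/(N−1) − a + δ)`, `(a, (N−3)/(N−1) − δ)`, `(b, (N−3)/(N−1) − 2δ)`,
`(b, 2/(N−1) − b + 2δ)` with `a = 1`, `b = 2N+1`. -/
def W1 (N : ℕ) (δ : ℝ) : Set (ℝ × ℝ) :=
  interior (convexHull ℝ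
    {((1 : ℝ), 2 / ((N : ℝ) - 1) - 1 + δ),
     ((1 : ℝ), ((N : ℝ) - 3) / ((N : ℝ) - 1) - δ),
     ((2 * (N : ℝ) + 1), ((N : ℝ) - 3) / ((N : ℝ) - 1) - 2 * δ),
     ((2 * (N : ℝ) + 1), 2 / ((N : ℝ) - 1) - (2 * (N : ℝ) + 1) + 2 * δ)})

/-!
With `c = 2/(N-1)`, `K = (N-3)/(N-1)` and `d = δ/(2N)`, `W₁` is the interior of the closed
trapezoid with vertical sides `s = 1`, `s = 2N + 1`, lower edge `t = (d - 1) s + c + (2N-1) d`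
and upper edge `t = -d s + K - (2N-1) d`, so it suffices to send each point of the closed
trapezoid into the open one.

For `s > 2` halving `s` keeps the point strictly inside the vertical strip and under the upper
edge, but `F₁` may drop it below the lower edge (of slope about `-1`). Then `F₂` raises it by
`s/2` above that edge, and it stays under the upper edge because it is within `O(δ)` of the
lower edge while the trapezoid is at least `K - c - O(δ) = (N-5)/(N-1) - O(δ)` high.

For `s ≤ 2` scaling by `N` lands strictly inside the strip. By `(N-1) c = 2 ≥ j` the map
`G_{j,1}` stays above the lower edge and by `(N-1) K = N - 3` the map `G_{j,2}` stays under the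
upper edge. If `G_{j,1}` overshoots the upper edge, `G_{j,2}`, lower by `N - 2j - 1`, still
clears the lower edge, since the trapezoid is about `Ns ≥ N` high at abscissa `Ns`.
-/

section Trapezoid

def trapezoid (a b m₁ q₁ m₂ q₂ : ℝ) : Set (ℝ × ℝ) :=
  {p | p.1 ∈ Icc a b ∧ p.2 ∈ Icc (m₁ * p.1 + q₁) (m₂ * p.1 + q₂)}

def openTrapezoid (a b m₁ q₁ m₂ q₂ : ℝ) : Set (ℝ × ℝ) :=
  {p | p.1 ∈ Ioo a b ∧ p.2 ∈ Ioo (m₁ * p.1 + q₁) (m₂ * p.1 + q₂)}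

variable {a b m₁ q₁ m₂ q₂ : ℝ}

theorem isClosed_trapezoid : IsClosed (trapezoid a b m₁ q₁ m₂ q₂) := by
  simp only [trapezoid, mem_Icc, ofPred_and]
  apply_rules [IsClosed.inter, isClosed_le] <;> fun_prop

theorem isOpen_openTrapezoid : IsOpen (openTrapezoid a b m₁ q₁ m₂ q₂) := by
  simp only [openTrapezoid, mem_Ioo, ofPred_and]
  apply_rules [IsOpen.inter, isOpen_lt] <;> fun_prop

theorem convex_trapezoid : Convex ℝ (trapezoid a b m₁ q₁ m₂ q₂) := by
  rintro x ⟨⟨hx₁, hx₂⟩, hx₃, hx₄⟩ y ⟨⟨hy₁, hy₂⟩, hy₃, hy₄⟩ μ ν hμ hν hμν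
  obtain rfl : ν = 1 - μ := eq_sub_of_add_eq' hμν
  simp only [trapezoid, mem_ofPred_eq, mem_Icc, Prod.fst_add, Prod.snd_add, Prod.smul_fst,
    Prod.smul_snd, smul_eq_mul]
  refine ⟨⟨?_, ?_⟩, ?_, ?_⟩ <;> nlinarith

theorem openTrapezoid_subset_trapezoid :
    openTrapezoid a b m₁ q₁ m₂ q₂ ⊆ trapezoid a b m₁ q₁ m₂ q₂ :=
  fun _ ⟨hs, ht⟩ => ⟨Ioo_subset_Icc_self hs, Ioo_subset_Icc_self ht⟩

theorem mk_mem_segment_graph {s : ℝ} (m q : ℝ) (hs : s ∈ Icc a b) :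
    (s, m * s + q) ∈ segment ℝ (a, m * a + q) (b, m * b + q) := by
  let f : ℝ →ᵃ[ℝ] ℝ × ℝ :=
    (LinearMap.id.prod (m • LinearMap.id)).toAffineMap + AffineMap.const ℝ ℝ (0, q)
  have hf : ∀ x, f x = (x, m * x + q) := fun x => by simp [f]
  rw [← hf, ← hf, ← hf, ← image_segment]
  exact mem_image_of_mem f (segment_eq_Icc (hs.1.trans hs.2) ▸ hs)

theorem convexHull_eq_trapezoid (hab : a ≤ b) (ha : m₁ * a + q₁ ≤ m₂ * a + q₂)
    (hb : m₁ * b + q₁ ≤ m₂ * b + q₂) :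
    convexHull ℝ {(a, m₁ * a + q₁), (a, m₂ * a + q₂), (b, m₂ * b + q₂), (b, m₁ * b + q₁)} =
      trapezoid a b m₁ q₁ m₂ q₂ := by
  apply (convexHull_min _ convex_trapezoid).antisymm
  · rintro ⟨s, t⟩ ⟨hs, ht⟩
    refine (convex_convexHull ℝ _).segment_subset
      (segment_subset_convexHull ?_ ?_ (mk_mem_segment_graph m₁ q₁ hs))
      (segment_subset_convexHull ?_ ?_ (mk_mem_segment_graph m₂ q₂ hs)) ?_
    iterate 4 simp
    rw [← Prod.image_mk_segment_right, segment_eq_Icc (ht.1.trans ht.2)]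
    exact mem_image_of_mem _ ht
  · simp only [insert_subset_iff, singleton_subset_iff, trapezoid, mem_ofPred_eq, mem_Icc]
    exact ⟨⟨⟨le_rfl, hab⟩, le_rfl, ha⟩, ⟨⟨le_rfl, hab⟩, ha, le_rfl⟩, ⟨⟨hab, le_rfl⟩, hb, le_rfl⟩,
      ⟨⟨hab, le_rfl⟩, le_rfl, hb⟩⟩

theorem openTrapezoid_subset_interior_trapezoid :
    openTrapezoid a b m₁ q₁ m₂ q₂ ⊆ interior (trapezoid a b m₁ q₁ m₂ q₂) :=
  interior_maximal openTrapezoid_subset_trapezoid isOpen_openTrapezoid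

end Trapezoid

def w1Trapezoid (n c K d : ℝ) : Set (ℝ × ℝ) :=
  trapezoid 1 (2 * n + 1) (d - 1) (c + (2 * n - 1) * d) (-d) (K - (2 * n - 1) * d)

def w1OpenTrapezoid (n c K d : ℝ) : Set (ℝ × ℝ) :=
  openTrapezoid 1 (2 * n + 1) (d - 1) (c + (2 * n - 1) * d) (-d) (K - (2 * n - 1) * d)

theorem W1_eq_interior_w1Trapezoid {N : ℕ} {δ d : ℝ} (hδ : 2 * N * d = δ) (hd : 0 < d)
    (hsmall : 8 * N * d ≤ (N - 3) / (N - 1) - 2 / (N - 1)) :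
    W1 N δ = interior (w1Trapezoid N (2 / (N - 1)) ((N - 3) / (N - 1)) d) := by
  have hN : (0 : ℝ) ≤ N := N.cast_nonneg
  rw [W1, w1Trapezoid, ← convexHull_eq_trapezoid (by linarith) (by nlinarith) (by nlinarith)]
  subst hδ
  congr 2
  ring_nf

section Covering

variable {n c K d : ℝ} {p : ℝ × ℝ}

theorem F1_mem_or_F2_mem (hd : 0 < d) (hsmall : 8 * n * d ≤ K - c)
    (hp : p ∈ w1Trapezoid n c K d) (hs : 2 < p.1) :
    F1 p ∈ w1OpenTrapezoid n c K d ∨ F2 p ∈ w1OpenTrapezoid n c K d := by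
  obtain ⟨s, t⟩ := p
  obtain ⟨⟨-, hs₂⟩, hlo, hhi⟩ := hp
  dsimp only at hs hs₂ hlo hhi
  have hds : 0 < d * s := by positivity
  have hhalf : s / 2 ∈ Ioo 1 (2 * n + 1) := ⟨by linarith, by linarith⟩
  simp only [w1OpenTrapezoid, openTrapezoid, F1, F2, mem_ofPred_eq]
  by_cases hF1 : (d - 1) * (s / 2) + (c + (2 * n - 1) * d) < t
  · exact Or.inl ⟨hhalf, hF1, by linarith⟩
  · refine Or.inr ⟨hhalf, by linarith, ?_⟩
    nlinarith

theorem Gmap_mem {N : ℕ} (j : Fin 3) (hN : 1 < (N : ℝ)) (hc : c * (N - 1) = 2)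
    (hK : K * (N - 1) = N - 3) (hd : 0 < d) (hsmall : 8 * N * d ≤ K - c)
    (hp : p ∈ w1Trapezoid N c K d) (hs : p.1 ≤ 2) :
    Gmap N j 0 p ∈ w1OpenTrapezoid N c K d ∨ Gmap N j 1 p ∈ w1OpenTrapezoid N c K d := by
  obtain ⟨s, t⟩ := p
  obtain ⟨⟨hs₁, -⟩, hlo, hhi⟩ := hp
  dsimp only at hs hs₁ hlo hhi
  have hj : ((j : ℕ) : ℝ) ≤ 2 := by exact_mod_cast Nat.lt_succ_iff.mp j.isLt
  have hj₀ : (0 : ℝ) ≤ (j : ℕ) := Nat.cast_nonneg _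
  have hNs : (N : ℝ) * s ∈ Ioo (1 : ℝ) (2 * N + 1) := ⟨by nlinarith, by nlinarith⟩
  have hgap : 0 < (N - 1) * ((2 * N - 1) * d) := by
    have : (0 : ℝ) < 2 * N - 1 := by linarith
    positivity
  have hloN := mul_le_mul_of_nonneg_left hlo (by linarith : (0 : ℝ) ≤ N)
  have hhiN := mul_le_mul_of_nonneg_left hhi (by linarith : (0 : ℝ) ≤ N)
  simp only [Gmap, w1OpenTrapezoid, openTrapezoid, mem_ofPred_eq]
  by_cases hG : N * t - (j : ℕ) < -d * (N * s) + (K - (2 * N - 1) * d)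
  · exact Or.inl ⟨hNs, by nlinarith, hG⟩
  · have hNs₁ : (N : ℝ) ≤ N * s := by nlinarith
    have hdNs : d * (N * s) ≤ d * (2 * N) :=
      mul_le_mul_of_nonneg_left (by nlinarith) hd.le
    refine Or.inr ⟨hNs, by nlinarith, by nlinarith⟩

theorem closure_interior_w1Trapezoid_subset {N : ℕ} (j : Fin 3) (hN : 1 < (N : ℝ))
    (hc : c * (N - 1) = 2) (hK : K * (N - 1) = N - 3) (hd : 0 < d) (hsmall : 8 * N * d ≤ K - c) :
    let W := interior (w1Trapezoid N c K d)
    closure W ⊆ F1 ⁻¹' W ∪ F2 ⁻¹' W ∪ Gmap N j 0 ⁻¹' W ∪ Gmap N j 1 ⁻¹' W := by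
  intro W p hp
  have hpQ : p ∈ w1Trapezoid N c K d := closure_minimal interior_subset isClosed_trapezoid hp
  have hinto : w1OpenTrapezoid N c K d ⊆ W := openTrapezoid_subset_interior_trapezoid
  rcases lt_or_ge 2 p.1 with hs | hs
  · rcases F1_mem_or_F2_mem hd hsmall hpQ hs with h | h
    exacts [Or.inl (Or.inl (Or.inl (hinto h))), Or.inl (Or.inl (Or.inr (hinto h)))]
  · rcases Gmap_mem j hN hc hK hd hsmall hpQ hs with h | h
    exacts [Or.inl (Or.inr (hinto h)), Or.inr (hinto h)]

end Covering

/-- **Covering condition for `W₁`** (Proposition 6.2): for `N ≥ 7` and all sufficiently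
small `δ > 0`, for each `j ∈ {1,2,3}` the closure of `W₁` is contained in
`F₁⁻¹(W₁) ∪ F₂⁻¹(W₁) ∪ G_{j,1}⁻¹(W₁) ∪ G_{j,2}⁻¹(W₁)`. -/
theorem W1_covering (N : ℕ) (hN : 7 ≤ N) :
    ∃ δ₀ > (0 : ℝ), ∀ δ : ℝ, 0 < δ → δ ≤ δ₀ → ∀ j : Fin 3,
      closure (W1 N δ) ⊆
        F1 ⁻¹' (W1 N δ) ∪ F2 ⁻¹' (W1 N δ) ∪
          (Gmap N j 0) ⁻¹' (W1 N δ) ∪ (Gmap N j 1) ⁻¹' (W1 N δ) := by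
  refine ⟨1 / 20, by norm_num, fun δ hδ hδ₀ j => ?_⟩
  have hN' : (7 : ℝ) ≤ N := by exact_mod_cast hN
  have hc : 2 / ((N : ℝ) - 1) * (N - 1) = 2 := div_mul_cancel₀ _ (by linarith)
  have hK : ((N : ℝ) - 3) / (N - 1) * (N - 1) = N - 3 := div_mul_cancel₀ _ (by linarith)
  have hd : 0 < δ / (2 * N) := by positivity
  have hsmall : 8 * N * (δ / (2 * N)) ≤ (N - 3) / (N - 1) - 2 / (N - 1) := by
    rw [show 8 * (N : ℝ) * (δ / (2 * N)) = 4 * δ by field_simp; ring, ← sub_div,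
      le_div_iff₀ (by linarith)]
    nlinarith
  rw [W1_eq_interior_w1Trapezoid (by field_simp) hd hsmall]
  exact closure_interior_w1Trapezoid_subset j (by linarith) hc hK hd hsmall

end
end

section
/- Suppose W₁ ⊆ ℝ* × ℝ is an open bounded set in the one-dimensional affine group Aff(1,ℝ) ≅ ℝ × ℝ* that satisfies the strong covering condition with respect to a family consisting of contracting operators {F_i}_{i∈I} and expanding operators {G_k}_{k∈J}, all of the form (s,t) ↦ (λ s, λ t + c) for various λ, c (i.e., acting diagonally on the scale coordinate). Define W_d := {(s,t₁,…,t_d) : (s,t_i) ∈ W₁ for all i} ⊆ ℝ^d ⋊ ℝ*. Assume additionally that for every s in the projection of closure(W₁) to the first coordinate, the vertical segment {(s,t) ∈ closure(W₁)} is sent into W₁ either entirely by contracting operators (for each point some F_i works) or entirely by expanding operators (for each point each of at least n expanding operators works). Then every point of closure(W_d) is mapped into W_d by a product operator Ψ₁ × ⋯ × Ψ_d where either all Ψ_i are contracting or all are expanding; in the latter case at least n^d distinct such expanding product operators work. -/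
/-!
The dichotomy hypothesis is decided by the base point `s` alone, so at a point `(s, t₁, …, t_d)`
of `closure W_d` the same alternative holds for every coordinate `(s, tᵢ) ∈ closure W₁`.
Choosing operators coordinatewise then gives a product operator, and in the expanding case the
product of the `d` sets of at least `n` admissible operators gives `n ^ d` of them.
-/

open Metric Set

theorem mem_closure_of_mem_closure_fiberPower {X Y ι : Type*} [TopologicalSpace X]
    [TopologicalSpace Y] {W : Set (X × Y)} {p : X × (ι → Y)}
    (hp : p ∈ closure {q : X × (ι → Y) | ∀ i, (q.1, q.2 i) ∈ W}) (i : ι) :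
    (p.1, p.2 i) ∈ closure W := by
  have hcont : Continuous fun q : X × (ι → Y) => (q.1, q.2 i) := by fun_prop
  have hsub : {q : X × (ι → Y) | ∀ i, (q.1, q.2 i) ∈ W} ⊆ (fun q => (q.1, q.2 i)) ⁻¹' W :=
    fun _ hq => hq i
  exact hcont.closure_preimage_subset W (closure_mono hsub hp)

theorem exists_finset_pi_pow_card_le_card {ι J : Type*} [Fintype ι] [DecidableEq ι] {n : ℕ}
    {P : ι → J → Prop} (h : ∀ i, ∃ S : Finset J, n ≤ S.card ∧ ∀ k ∈ S, P i k) :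
    ∃ S : Finset (ι → J), n ^ Fintype.card ι ≤ S.card ∧ ∀ σ ∈ S, ∀ i, P i (σ i) := by
  choose S hcard hS using h
  refine ⟨Fintype.piFinset S, ?_, fun σ hσ i => hS i (σ i) (Fintype.mem_piFinset.mp hσ i)⟩
  rw [Fintype.card_piFinset]
  exact Finset.pow_card_le_prod _ _ _ fun i _ => hcard i

theorem expanding_cover_of_fiber_product_general {d : ℕ} {I J : Type*}
    (W1 : Set (ℝ × ℝ))
    (lF lG : ℝ) (cF : I → ℝ) (cG : J → ℝ)
    (n : ℕ)
    (hdich : ∀ s : ℝ, (∃ t, (s, t) ∈ closure W1) →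
      (∀ t, (s, t) ∈ closure W1 → ∃ i : I, (lF * s, lF * t + cF i) ∈ W1) ∨
      (∀ t, (s, t) ∈ closure W1 → ∃ S : Finset J, n ≤ S.card ∧
        ∀ k ∈ S, (lG * s, lG * t + cG k) ∈ W1)) :
    ∀ p : ℝ × (Fin d → ℝ),
      p ∈ closure {q : ℝ × (Fin d → ℝ) | ∀ i, (q.1, q.2 i) ∈ W1} →
      (∃ σ : Fin d → I, ∀ i, (lF * p.1, lF * p.2 i + cF (σ i)) ∈ W1) ∨
      (∃ S : Finset (Fin d → J), n ^ d ≤ S.card ∧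
        ∀ σ ∈ S, ∀ i, (lG * p.1, lG * p.2 i + cG (σ i)) ∈ W1) := by
  intro p hp
  have hcl := mem_closure_of_mem_closure_fiberPower hp
  rcases d.eq_zero_or_pos with rfl | hd
  · exact Or.inl ⟨Fin.elim0, fun i => i.elim0⟩
  rcases hdich p.1 ⟨p.2 ⟨0, hd⟩, hcl ⟨0, hd⟩⟩ with hF | hG
  · left
    choose σ hσ using fun i => hF (p.2 i) (hcl i)
    exact ⟨σ, hσ⟩
  · right
    simpa using exists_finset_pi_pow_card_le_card fun i => hG (p.2 i) (hcl i)

/-- **Expanding `n^d`-cover of the fiber product `W_d`** (Lemma 6.4): suppose `W₁` is an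
open bounded subset of `Aff(1,ℝ) ≅ ℝ × ℝ*` satisfying the strong covering condition with
respect to contracting operators `(s,t) ↦ (λ_F s, λ_F t + c_F i)` and expanding operators
`(s,t) ↦ (λ_G s, λ_G t + c_G k)`, and that every vertical segment of `closure W₁` is sent
into `W₁` either entirely by contracting operators (at each point some `F i` works) or
entirely by expanding operators (at each point at least `n` of the `G k` work). Then
every point of the closure of the fiber product
`W_d = {(s,t₁,…,t_d) : (s,t_i) ∈ W₁ ∀ i}` is mapped into `W_d` by a product operator
`Ψ₁ × ⋯ × Ψ_d` with all factors contracting or all expanding; in the expanding case at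
least `n^d` distinct product operators work. -/
theorem expanding_cover_of_fiber_product {d : ℕ} {I J : Type*} [Fintype I] [Fintype J]
    (W1 : Set (ℝ × ℝ)) (hW1o : IsOpen W1) (hW1b : Bornology.IsBounded W1)
    (lF lG : ℝ) (cF : I → ℝ) (cG : J → ℝ)
    (hlF : |lF| < 1) (hlG : 1 < |lG|)
    (n : ℕ)
    (hsc : ∃ δ > (0 : ℝ), (⋃ p ∈ W1, ball p δ) ⊆
      (⋃ i : I, (fun p : ℝ × ℝ => (lF * p.1, lF * p.2 + cF i)) ⁻¹'
        {q ∈ W1 | ball q δ ⊆ W1}) ∪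
      (⋃ k : J, (fun p : ℝ × ℝ => (lG * p.1, lG * p.2 + cG k)) ⁻¹'
        {q ∈ W1 | ball q δ ⊆ W1}))
    (hdich : ∀ s : ℝ, (∃ t, (s, t) ∈ closure W1) →
      (∀ t, (s, t) ∈ closure W1 → ∃ i : I, (lF * s, lF * t + cF i) ∈ W1) ∨
      (∀ t, (s, t) ∈ closure W1 → ∃ S : Finset J, n ≤ S.card ∧
        ∀ k ∈ S, (lG * s, lG * t + cG k) ∈ W1)) :
    ∀ p : ℝ × (Fin d → ℝ),
      p ∈ closure {q : ℝ × (Fin d → ℝ) | ∀ i, (q.1, q.2 i) ∈ W1} →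
      (∃ σ : Fin d → I, ∀ i, (lF * p.1, lF * p.2 i + cF (σ i)) ∈ W1) ∨
      (∃ S : Finset (Fin d → J), n ^ d ≤ S.card ∧
        ∀ σ ∈ S, ∀ i, (lG * p.1, lG * p.2 i + cG (σ i)) ∈ W1) :=
  expanding_cover_of_fiber_product_general W1 lF lG cF cG n hdich
end
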